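/- arXiv:2106.10894 — 5 statements merged into one kernel-verified Lean document; each statement's English description precedes it below -/
import Mathlib

section
/- Let (X,𝒜,μ) be a bounded charge space and let f : X → ℝ. Then f ∈ L1(X,𝒜,μ) if and only if both of the following hold: (a) there exists a countable set C ⊂ ℝ such that f⁻¹(y,∞) belongs to the Peano-Jordan completion 𝒜̄ for all y ∈ ℝ∖C; and (b) for every ε > 0 there exists y ∈ (0,∞) such that |f|·1_{|f|⁻¹(y,∞)} ∈ L1(X,𝒜,μ) and ∫ |f|·1_{|f|⁻¹(y,∞)} dμ < ε. -/
open Filter Set Topology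

section ChargeDefs

variable {X : Type*}

/-- A field of sets on `X`: contains `∅`, closed under complements and finite unions. -/
structure IsSetField (𝒜 : Set (Set X)) : Prop where
  empty_mem : (∅ : Set X) ∈ 𝒜
  compl_mem : ∀ A ∈ 𝒜, Aᶜ ∈ 𝒜
  union_mem : ∀ A ∈ 𝒜, ∀ B ∈ 𝒜, A ∪ B ∈ 𝒜

/-- A (bounded, non-negative) charge space: a field of sets together with a finitely
additive non-negative real-valued set function vanishing on `∅`.  (The function `μ` is
given on all of `𝒫(X)`; only its values on `𝒜` are constrained or used.) -/
structure IsCharge (𝒜 : Set (Set X)) (μ : Set X → ℝ) : Prop where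
  isSetField : IsSetField 𝒜
  empty : μ ∅ = 0
  nonneg : ∀ A ∈ 𝒜, 0 ≤ μ A
  additive : ∀ A ∈ 𝒜, ∀ B ∈ 𝒜, Disjoint A B → μ (A ∪ B) = μ A + μ B

/-- The outer charge `μ*(A) = inf {μ B : B ∈ 𝒜, A ⊆ B}`. -/
noncomputable def outerCharge (𝒜 : Set (Set X)) (μ : Set X → ℝ) (A : Set X) : ℝ :=
  sInf (μ '' {B | B ∈ 𝒜 ∧ A ⊆ B})

/-- A null function: `μ*({x : |h x| > ε}) = 0` for every `ε > 0`. -/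
def IsNullFn (𝒜 : Set (Set X)) (μ : Set X → ℝ) (h : X → ℝ) : Prop :=
  ∀ ε > (0 : ℝ), outerCharge 𝒜 μ {x | ε < |h x|} = 0

/-- `f = g` almost everywhere: `f - g` is a null function. -/
def EqAE (𝒜 : Set (Set X)) (μ : Set X → ℝ) (f g : X → ℝ) : Prop :=
  IsNullFn 𝒜 μ (fun x => f x - g x)

/-- `f ≤ g` almost everywhere: `f ≤ g + h` for some null function `h`. -/
def LeAE (𝒜 : Set (Set X)) (μ : Set X → ℝ) (f g : X → ℝ) : Prop :=
  ∃ h : X → ℝ, IsNullFn 𝒜 μ h ∧ ∀ x, f x ≤ g x + h x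

/-- Hazy convergence of a sequence of functions. -/
def HazyConv (𝒜 : Set (Set X)) (μ : Set X → ℝ) (fn : ℕ → X → ℝ) (f : X → ℝ) : Prop :=
  ∀ ε > (0 : ℝ), Tendsto (fun n => outerCharge 𝒜 μ {x | ε < |fn n x - f x|}) atTop (𝓝 0)

/-- A simple function w.r.t. the field `𝒜`: `Σ c_k 1_{A_k}` for a finite partition
`{A_k} ⊆ 𝒜` of `X`. -/
def IsSimpleFn (𝒜 : Set (Set X)) (f : X → ℝ) : Prop :=
  ∃ (n : ℕ) (c : Fin n → ℝ) (A : Fin n → Set X),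
    (∀ k, A k ∈ 𝒜) ∧ (Pairwise fun i j => Disjoint (A i) (A j)) ∧
    (⋃ k, A k) = Set.univ ∧ ∀ x, f x = ∑ k, (A k).indicator (fun _ => c k) x

/-- `T₁`-measurability: `f` is the hazy limit of a sequence of simple functions.
`MemL0 𝒜 μ f` says `f ∈ L₀(X,𝒜,μ)`. -/
def MemL0 (𝒜 : Set (Set X)) (μ : Set X → ℝ) (f : X → ℝ) : Prop :=
  ∃ fn : ℕ → X → ℝ, (∀ n, IsSimpleFn 𝒜 (fn n)) ∧ HazyConv 𝒜 μ fn f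

/-- Integral of a simple function: `Σ_y y·μ(f⁻¹{y})` (a finite sum for simple `f`;
for a simple function `Σ c_k 1_{A_k}` over a partition this equals `Σ c_k μ(A_k)`). -/
noncomputable def sIntegral (μ : Set X → ℝ) (f : X → ℝ) : ℝ :=
  ∑ᶠ y, y * μ (f ⁻¹' {y})

/-- A determining sequence for `f`: simple functions converging hazily to `f` with
`∫ |f_n - f_m| dμ → 0` as `m, n → ∞`. -/
def IsDetermining (𝒜 : Set (Set X)) (μ : Set X → ℝ) (fn : ℕ → X → ℝ) (f : X → ℝ) : Prop :=
  (∀ n, IsSimpleFn 𝒜 (fn n)) ∧ HazyConv 𝒜 μ fn f ∧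
    Tendsto (fun mn : ℕ × ℕ => sIntegral μ (fun x => |fn mn.1 x - fn mn.2 x|)) atTop (𝓝 0)

/-- Integrability w.r.t. a charge: existence of a determining sequence.
`MemL1 𝒜 μ f` says `f ∈ L₁(X,𝒜,μ)`. -/
def MemL1 (𝒜 : Set (Set X)) (μ : Set X → ℝ) (f : X → ℝ) : Prop :=
  ∃ fn : ℕ → X → ℝ, IsDetermining 𝒜 μ fn f

-- The integral `∫ f dμ` of an integrable function: the limit of the integrals of
-- any determining sequence (this limit is independent of the choice).
open Classical in
noncomputable def chargeIntegral (𝒜 : Set (Set X)) (μ : Set X → ℝ) (f : X → ℝ) : ℝ :=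
  if h : ∃ fn : ℕ → X → ℝ, IsDetermining 𝒜 μ fn f then
    limUnder atTop (fun n => sIntegral μ (h.choose n))
  else 0

/-- Smoothness: for every `ε > 0` there is `k > 0` with `μ*({x : |f x| > k}) < ε`. -/
def SmoothFn (𝒜 : Set (Set X)) (μ : Set X → ℝ) (f : X → ℝ) : Prop :=
  ∀ ε > (0 : ℝ), ∃ k > (0 : ℝ), outerCharge 𝒜 μ {x | k < |f x|} < ε

/-- The field of the Peano-Jordan completion of `(X,𝒜,μ)`. -/
def pjField (𝒜 : Set (Set X)) (μ : Set X → ℝ) : Set (Set X) :=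
  {A | ∀ ε > (0 : ℝ), ∃ B ∈ 𝒜, ∃ C ∈ 𝒜, B ⊆ A ∧ A ⊆ C ∧ μ (C \ B) < ε}

/-- The charge of the Peano-Jordan completion: `μ̄(A) = sup {μ B : B ∈ 𝒜, B ⊆ A}`. -/
noncomputable def pjCharge (𝒜 : Set (Set X)) (μ : Set X → ℝ) (A : Set X) : ℝ :=
  sSup (μ '' {B | B ∈ 𝒜 ∧ B ⊆ A})

/-- The pseudometric `d` on `L₀`. -/
noncomputable def hazyDist (𝒜 : Set (Set X)) (μ : Set X → ℝ) (f g : X → ℝ) : ℝ :=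
  sInf {ε : ℝ | 0 < ε ∧ outerCharge 𝒜 μ {x | ε < |f x - g x|} < ε}

/-- `f ∈ L_p(X,𝒜,μ)` for `p ∈ [1,∞)`: `f` is `T₁`-measurable and `|f|^p` integrable. -/
def MemLpC (𝒜 : Set (Set X)) (μ : Set X → ℝ) (p : ℝ) (f : X → ℝ) : Prop :=
  MemL0 𝒜 μ f ∧ MemL1 𝒜 μ (fun x => |f x| ^ p)

/-- `f ∈ L_p` for `p ∈ {0} ∪ [1,∞)`. -/
def MemLp' (𝒜 : Set (Set X)) (μ : Set X → ℝ) (p : ℝ) (f : X → ℝ) : Prop :=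
  if p = 0 then MemL0 𝒜 μ f else MemLpC 𝒜 μ p f

/-- The distance on `L_p`: the pseudometric `d` for `p = 0`, and
`‖f - g‖_p = (∫ |f-g|^p dμ)^(1/p)` for `p ≥ 1`. -/
noncomputable def LpDist (𝒜 : Set (Set X)) (μ : Set X → ℝ) (p : ℝ) (f g : X → ℝ) : ℝ :=
  if p = 0 then hazyDist 𝒜 μ f g
  else (chargeIntegral 𝒜 μ fun x => |f x - g x| ^ p) ^ (1 / p)

/-- The collection of null sets of a charge space. -/
def nullSets (𝒜 : Set (Set X)) (μ : Set X → ℝ) : Set (Set X) :=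
  {A | outerCharge 𝒜 μ A = 0}

/-- The smallest field of sets on `X` containing a given collection `𝒞`. -/
def genSetField (𝒞 : Set (Set X)) : Set (Set X) :=
  ⋂₀ {𝒟 | IsSetField 𝒟 ∧ 𝒞 ⊆ 𝒟}

end ChargeDefs
section Basics

variable {X : Type*} {𝒜 : Set (Set X)} {μ : Set X → ℝ}

namespace IsCharge

variable (hμ : IsCharge 𝒜 μ)
include hμ

lemma univ_mem : (Set.univ : Set X) ∈ 𝒜 := by
  have := hμ.isSetField.compl_mem ∅ hμ.isSetField.empty_mem
  simpa using this

lemma inter_mem {A B : Set X} (hA : A ∈ 𝒜) (hB : B ∈ 𝒜) : A ∩ B ∈ 𝒜 := by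
  have h1 := hμ.isSetField.union_mem Aᶜ (hμ.isSetField.compl_mem A hA) Bᶜ
    (hμ.isSetField.compl_mem B hB)
  have h2 := hμ.isSetField.compl_mem _ h1
  simpa [Set.compl_union] using h2

lemma diff_mem {A B : Set X} (hA : A ∈ 𝒜) (hB : B ∈ 𝒜) : A \ B ∈ 𝒜 := by
  have := hμ.inter_mem hA (hμ.isSetField.compl_mem B hB)
  simpa [Set.diff_eq] using this

lemma union_mem {A B : Set X} (hA : A ∈ 𝒜) (hB : B ∈ 𝒜) : A ∪ B ∈ 𝒜 :=
  hμ.isSetField.union_mem A hA B hB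

lemma mono {A B : Set X} (hA : A ∈ 𝒜) (hB : B ∈ 𝒜) (hAB : A ⊆ B) : μ A ≤ μ B := by
  have h1 : μ (A ∪ (B \ A)) = μ A + μ (B \ A) :=
    hμ.additive A hA _ (hμ.diff_mem hB hA) (Set.disjoint_sdiff_right)
  have h2 : A ∪ (B \ A) = B := Set.union_diff_cancel' (le_refl _) hAB
  have h3 : 0 ≤ μ (B \ A) := hμ.nonneg _ (hμ.diff_mem hB hA)
  rw [h2] at h1; linarith

lemma subadd {A B : Set X} (hA : A ∈ 𝒜) (hB : B ∈ 𝒜) : μ (A ∪ B) ≤ μ A + μ B := by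
  have h1 : μ (A ∪ (B \ A)) = μ A + μ (B \ A) :=
    hμ.additive A hA _ (hμ.diff_mem hB hA) (Set.disjoint_sdiff_right)
  have h2 : A ∪ (B \ A) = A ∪ B := by rw [Set.union_diff_self]
  have h3 : μ (B \ A) ≤ μ B := hμ.mono (hμ.diff_mem hB hA) hB Set.diff_subset
  rw [h2] at h1; linarith

lemma biUnion_mem {ι : Type*} (s : Finset ι) {B : ι → Set X} (hB : ∀ i ∈ s, B i ∈ 𝒜) :
    (⋃ i ∈ s, B i) ∈ 𝒜 := by
  classical
  induction s using Finset.induction_on with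
  | empty => simpa using hμ.isSetField.empty_mem
  | @insert a s ha ih =>
      rw [Finset.set_biUnion_insert]
      exact hμ.union_mem (hB a (Finset.mem_insert_self a s))
        (ih fun i hi => hB i (Finset.mem_insert_of_mem hi))

lemma sum_biUnion {ι : Type*} (s : Finset ι) {B : ι → Set X} (hB : ∀ i ∈ s, B i ∈ 𝒜)
    (hd : (s : Set ι).Pairwise (Function.onFun Disjoint B)) :
    μ (⋃ i ∈ s, B i) = ∑ i ∈ s, μ (B i) := by
  classical
  induction s using Finset.induction_on with
  | empty => simpa using hμ.empty
  | @insert a s ha ih =>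
      rw [Finset.set_biUnion_insert, Finset.sum_insert ha]
      have hdisj : Disjoint (B a) (⋃ i ∈ s, B i) := by
        rw [Set.disjoint_iUnion_right]
        intro i
        rw [Set.disjoint_iUnion_right]
        intro hi
        exact hd (Finset.mem_insert_self a s) (Finset.mem_insert_of_mem hi)
          (by rintro rfl; exact ha hi)
      rw [hμ.additive _ (hB a (Finset.mem_insert_self a s)) _
        (hμ.biUnion_mem s fun i hi => hB i (Finset.mem_insert_of_mem hi)) hdisj,
        ih (fun i hi => hB i (Finset.mem_insert_of_mem hi))
          (hd.mono (by simp [Set.subset_insert]))]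

end IsCharge

end Basics
section OuterCharge

variable {X : Type*} {𝒜 : Set (Set X)} {μ : Set X → ℝ}

namespace IsCharge

variable (hμ : IsCharge 𝒜 μ)
include hμ

lemma outer_set_nonempty (A : Set X) : (μ '' {B | B ∈ 𝒜 ∧ A ⊆ B}).Nonempty :=
  ⟨μ Set.univ, ⟨Set.univ, ⟨hμ.univ_mem, Set.subset_univ A⟩, rfl⟩⟩

lemma outer_set_bdd (A : Set X) : BddBelow (μ '' {B | B ∈ 𝒜 ∧ A ⊆ B}) := by
  refine ⟨0, ?_⟩
  rintro x ⟨B, ⟨hB, -⟩, rfl⟩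
  exact hμ.nonneg B hB

lemma outer_nonneg (A : Set X) : 0 ≤ outerCharge 𝒜 μ A :=
  le_csInf (hμ.outer_set_nonempty A) (by rintro x ⟨B, ⟨hB, -⟩, rfl⟩; exact hμ.nonneg B hB)

lemma outer_le {A B : Set X} (hB : B ∈ 𝒜) (hAB : A ⊆ B) : outerCharge 𝒜 μ A ≤ μ B :=
  csInf_le (hμ.outer_set_bdd A) ⟨B, ⟨hB, hAB⟩, rfl⟩

lemma outer_mono {A B : Set X} (hAB : A ⊆ B) : outerCharge 𝒜 μ A ≤ outerCharge 𝒜 μ B := by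
  refine le_csInf (hμ.outer_set_nonempty B) ?_
  rintro x ⟨C, ⟨hC, hBC⟩, rfl⟩
  exact hμ.outer_le hC (hAB.trans hBC)

lemma outer_eq {A : Set X} (hA : A ∈ 𝒜) : outerCharge 𝒜 μ A = μ A := by
  refine le_antisymm (hμ.outer_le hA (le_refl _)) (le_csInf (hμ.outer_set_nonempty A) ?_)
  rintro x ⟨C, ⟨hC, hAC⟩, rfl⟩
  exact hμ.mono hA hC hAC

lemma exists_cover {A : Set X} {δ : ℝ} (hδ : 0 < δ) :
    ∃ B ∈ 𝒜, A ⊆ B ∧ μ B < outerCharge 𝒜 μ A + δ := by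
  obtain ⟨x, ⟨B, ⟨hB, hAB⟩, rfl⟩, hlt⟩ :=
    exists_lt_of_csInf_lt (hμ.outer_set_nonempty A) (lt_add_of_pos_right _ hδ)
  exact ⟨B, hB, hAB, hlt⟩

lemma outer_union_le (A B : Set X) :
    outerCharge 𝒜 μ (A ∪ B) ≤ outerCharge 𝒜 μ A + outerCharge 𝒜 μ B := by
  refine le_of_forall_pos_le_add fun δ hδ => ?_
  obtain ⟨C, hC, hAC, hC2⟩ := hμ.exists_cover (A := A) (half_pos hδ)
  obtain ⟨D, hD, hBD, hD2⟩ := hμ.exists_cover (A := B) (half_pos hδ)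
  calc outerCharge 𝒜 μ (A ∪ B) ≤ μ (C ∪ D) :=
        hμ.outer_le (hμ.union_mem hC hD) (Set.union_subset_union hAC hBD)
    _ ≤ μ C + μ D := hμ.subadd hC hD
    _ ≤ _ := by linarith

lemma outer_empty : outerCharge 𝒜 μ (∅ : Set X) = 0 := by
  rw [hμ.outer_eq hμ.isSetField.empty_mem, hμ.empty]

end IsCharge

end OuterCharge
section SimpleFns

open Set

variable {X : Type*} {𝒜 : Set (Set X)} {μ : Set X → ℝ} {f g : X → ℝ}

/-- The blocks of the common refinement of level sets of two functions. -/
lemma preimage_op2_eq (hf : (Set.range f).Finite) (hg : (Set.range g).Finite)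
    (op : ℝ → ℝ → ℝ) (y : ℝ) :
    (fun x => op (f x) (g x)) ⁻¹' {y} =
      ⋃ p ∈ (hf.toFinset ×ˢ hg.toFinset).filter (fun p => op p.1 p.2 = y),
        f ⁻¹' {p.1} ∩ g ⁻¹' {p.2} := by
  ext x
  simp only [Set.mem_preimage, Set.mem_singleton_iff, Set.mem_iUnion, Finset.mem_filter,
    Finset.mem_product, Set.Finite.mem_toFinset, Set.mem_inter_iff]
  constructor
  · intro h
    exact ⟨(f x, g x), ⟨⟨⟨Set.mem_range_self x, Set.mem_range_self x⟩, h⟩, rfl, rfl⟩⟩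
  · rintro ⟨⟨a, b⟩, ⟨⟨-, -⟩, hop⟩, ha, hb⟩
    simp only [Set.mem_preimage, Set.mem_singleton_iff] at ha hb
    rw [ha, hb]; exact hop

lemma blocks_disjoint (f g : X → ℝ) {p q : ℝ × ℝ} (hpq : p ≠ q) :
    Disjoint (f ⁻¹' {p.1} ∩ g ⁻¹' {p.2}) (f ⁻¹' {q.1} ∩ g ⁻¹' {q.2}) := by
  rw [Set.disjoint_left]
  rintro x ⟨h1, h2⟩ ⟨h3, h4⟩
  simp only [Set.mem_preimage, Set.mem_singleton_iff] at h1 h2 h3 h4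
  exact hpq (Prod.ext (h1 ▸ h3.symm ▸ rfl) (h2 ▸ h4.symm ▸ rfl))

namespace IsCharge

variable (hμ : IsCharge 𝒜 μ)
include hμ

lemma isSimpleFn_iff (f : X → ℝ) :
    IsSimpleFn 𝒜 f ↔ (Set.range f).Finite ∧ ∀ y, f ⁻¹' {y} ∈ 𝒜 := by
  classical
  constructor
  · rintro ⟨n, c, A, hA, hdisj, hcov, hf⟩
    have hmem : ∀ x, ∃ k, x ∈ A k := by
      intro x
      have : x ∈ ⋃ k, A k := hcov ▸ Set.mem_univ x
      exact Set.mem_iUnion.mp this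
    have hval : ∀ x k, x ∈ A k → f x = c k := by
      intro x k hk
      rw [hf x, Finset.sum_eq_single k]
      · simp [Set.indicator_of_mem hk]
      · intro b _ hb
        exact Set.indicator_of_notMem
          (fun hxb => Set.disjoint_left.mp (hdisj hb) hxb hk) _
      · simp
    constructor
    · refine (Set.finite_range c).subset ?_
      rintro y ⟨x, rfl⟩
      obtain ⟨k, hk⟩ := hmem x
      exact ⟨k, (hval x k hk).symm⟩
    · intro y
      have : f ⁻¹' {y} = ⋃ k ∈ Finset.univ.filter (fun k => c k = y), A k := by
        ext x
        simp only [Set.mem_preimage, Set.mem_singleton_iff, Set.mem_iUnion,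
          Finset.mem_filter, Finset.mem_univ, true_and]
        constructor
        · intro h
          obtain ⟨k, hk⟩ := hmem x
          exact ⟨k, by rw [← hval x k hk]; exact h, hk⟩
        · rintro ⟨k, hck, hk⟩
          rw [hval x k hk, hck]
      rw [this]
      exact hμ.biUnion_mem _ fun k _ => hA k
  · rintro ⟨hfin, hpre⟩
    classical
    set R : Finset ℝ := hfin.toFinset with hR
    refine ⟨R.card, fun k => (R.equivFin.symm k : ℝ), fun k => f ⁻¹' {(R.equivFin.symm k : ℝ)},
      fun k => hpre _, ?_, ?_, ?_⟩
    · intro i j hij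
      rw [Set.disjoint_left]
      intro x hx hx'
      simp only [Set.mem_preimage, Set.mem_singleton_iff] at hx hx'
      exact hij (R.equivFin.symm.injective (Subtype.ext (hx ▸ hx'.symm ▸ rfl)))
    · refine Set.eq_univ_of_forall fun x => ?_
      have hx : f x ∈ R := hfin.mem_toFinset.mpr (Set.mem_range_self x)
      refine Set.mem_iUnion.mpr ⟨R.equivFin ⟨f x, hx⟩, ?_⟩
      show x ∈ f ⁻¹' {(R.equivFin.symm (R.equivFin ⟨f x, hx⟩) : ℝ)}
      simp
    · intro x
      have hx : f x ∈ R := hfin.mem_toFinset.mpr (Set.mem_range_self x)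
      rw [Finset.sum_eq_single (R.equivFin ⟨f x, hx⟩)]
      · rw [Set.indicator_of_mem]
        · simp
        · show x ∈ f ⁻¹' {(R.equivFin.symm (R.equivFin ⟨f x, hx⟩) : ℝ)}
          simp
      · intro b _ hb
        refine Set.indicator_of_notMem (fun hxb => ?_) _
        simp only [Set.mem_preimage, Set.mem_singleton_iff] at hxb
        apply hb
        have : R.equivFin.symm b = (⟨f x, hx⟩ : {y // y ∈ R}) := Subtype.ext hxb.symm
        rw [← this]; simp
      · simp

lemma IsSimpleFn.range_finite (hf : IsSimpleFn 𝒜 f) : (Set.range f).Finite :=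
  ((hμ.isSimpleFn_iff f).mp hf).1

lemma IsSimpleFn.preim (hf : IsSimpleFn 𝒜 f) (y : ℝ) : f ⁻¹' {y} ∈ 𝒜 :=
  ((hμ.isSimpleFn_iff f).mp hf).2 y

lemma simple_op2 (hf : IsSimpleFn 𝒜 f) (hg : IsSimpleFn 𝒜 g) (op : ℝ → ℝ → ℝ) :
    IsSimpleFn 𝒜 (fun x => op (f x) (g x)) := by
  classical
  rw [hμ.isSimpleFn_iff]
  obtain ⟨hffin, hfpre⟩ := (hμ.isSimpleFn_iff f).mp hf
  obtain ⟨hgfin, hgpre⟩ := (hμ.isSimpleFn_iff g).mp hg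
  constructor
  · refine (Set.Finite.image2 op hffin hgfin).subset ?_
    rintro y ⟨x, rfl⟩
    exact Set.mem_image2_of_mem (Set.mem_range_self x) (Set.mem_range_self x)
  · intro y
    rw [preimage_op2_eq hffin hgfin op y]
    exact hμ.biUnion_mem _ fun p _ => hμ.inter_mem (hfpre _) (hgpre _)

lemma simple_indicator {A : Set X} (hA : A ∈ 𝒜) (c : ℝ) :
    IsSimpleFn 𝒜 (A.indicator fun _ => c) := by
  classical
  rw [hμ.isSimpleFn_iff]
  constructor
  · refine ((Set.finite_singleton c).insert 0).subset ?_
    rintro y ⟨x, rfl⟩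
    by_cases hx : x ∈ A
    · right; simp [Set.indicator_of_mem hx]
    · left; simp [Set.indicator_of_notMem hx]
  · intro y
    by_cases hyc : y = c
    · by_cases hy0 : y = 0
      · have : (A.indicator fun _ => c) ⁻¹' {y} = Set.univ := by
          ext x
          by_cases hx : x ∈ A <;>
            simp [Set.indicator_apply, hx, ← hyc, hy0]
        rw [this]; exact hμ.univ_mem
      · have : (A.indicator fun _ => c) ⁻¹' {y} = A := by
          ext x
          by_cases hx : x ∈ A <;>
            simp [Set.indicator_apply, hx, ← hyc, hy0, Ne.symm hy0]
        rw [this]; exact hA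
    · by_cases hy0 : y = 0
      · have hc0 : c ≠ 0 := fun h => hyc (by rw [hy0, h])
        have : (A.indicator fun _ => c) ⁻¹' {y} = Aᶜ := by
          ext x
          by_cases hx : x ∈ A <;>
            simp [Set.indicator_apply, hx, hy0, hc0]
        rw [this]; exact hμ.isSetField.compl_mem A hA
      · have hcy : c ≠ y := fun h => hyc h.symm
        have : (A.indicator fun _ => c) ⁻¹' {y} = ∅ := by
          ext x
          by_cases hx : x ∈ A <;>
            simp [Set.indicator_apply, hx, hy0, Ne.symm hy0, hcy]
        rw [this]; exact hμ.isSetField.empty_mem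

lemma simple_const (c : ℝ) : IsSimpleFn 𝒜 (fun _ : X => c) := by
  have := hμ.simple_indicator hμ.univ_mem c
  simpa [Set.indicator_univ] using this

lemma simple_preimage_Ioi (hf : IsSimpleFn 𝒜 f) (y : ℝ) : {x | y < f x} ∈ 𝒜 := by
  classical
  obtain ⟨hfin, hpre⟩ := (hμ.isSimpleFn_iff f).mp hf
  have : {x | y < f x} = ⋃ a ∈ hfin.toFinset.filter (fun a => y < a), f ⁻¹' {a} := by
    ext x
    simp only [Set.mem_setOf_eq, Set.mem_iUnion, Finset.mem_filter, Set.Finite.mem_toFinset,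
      Set.mem_preimage, Set.mem_singleton_iff]
    constructor
    · intro h
      exact ⟨f x, ⟨Set.mem_range_self x, h⟩, rfl⟩
    · rintro ⟨a, ⟨-, ha⟩, hfa⟩
      rw [hfa]; exact ha
  rw [this]
  exact hμ.biUnion_mem _ fun a _ => hpre a

end IsCharge

end SimpleFns
section SIntegral

open Set Function

variable {X : Type*} {𝒜 : Set (Set X)} {μ : Set X → ℝ} {f g : X → ℝ}

namespace IsCharge

variable (hμ : IsCharge 𝒜 μ)
include hμ

/-- Master formula: integral of a composition of two simple functions. -/
lemma sIntegral_op2 (hffin : (Set.range f).Finite) (hgfin : (Set.range g).Finite)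
    (hfpre : ∀ y, f ⁻¹' {y} ∈ 𝒜) (hgpre : ∀ y, g ⁻¹' {y} ∈ 𝒜) (op : ℝ → ℝ → ℝ) :
    sIntegral μ (fun x => op (f x) (g x)) =
      ∑ p ∈ hffin.toFinset ×ˢ hgfin.toFinset,
        op p.1 p.2 * μ (f ⁻¹' {p.1} ∩ g ⁻¹' {p.2}) := by
  classical
  set P := hffin.toFinset ×ˢ hgfin.toFinset with hP
  set S : Finset ℝ := P.image (fun p => op p.1 p.2) with hS
  have step1 : sIntegral μ (fun x => op (f x) (g x)) =
      ∑ y ∈ S, y * μ ((fun x => op (f x) (g x)) ⁻¹' {y}) := by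
    apply finsum_eq_finset_sum_of_support_subset
    intro y hy
    simp only [Function.mem_support] at hy
    by_cases hne : (fun x => op (f x) (g x)) ⁻¹' {y} = ∅
    · exact absurd (by rw [hne, hμ.empty, mul_zero]) hy
    · obtain ⟨x, hx⟩ := Set.nonempty_iff_ne_empty.mpr hne
      simp only [Set.mem_preimage, Set.mem_singleton_iff] at hx
      exact Finset.mem_coe.mpr (Finset.mem_image.mpr ⟨(f x, g x), Finset.mem_product.mpr
          ⟨hffin.mem_toFinset.mpr (Set.mem_range_self x),
           hgfin.mem_toFinset.mpr (Set.mem_range_self x)⟩, hx⟩)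
  have step2 : ∀ y ∈ S, y * μ ((fun x => op (f x) (g x)) ⁻¹' {y}) =
      ∑ p ∈ P.filter (fun p => op p.1 p.2 = y),
        op p.1 p.2 * μ (f ⁻¹' {p.1} ∩ g ⁻¹' {p.2}) := by
    intro y _
    rw [preimage_op2_eq hffin hgfin op y,
      hμ.sum_biUnion _ (fun p _ => hμ.inter_mem (hfpre _) (hgpre _))
        (fun p _ q _ hpq => blocks_disjoint f g hpq), Finset.mul_sum]
    refine Finset.sum_congr rfl fun p hp => ?_
    rw [(Finset.mem_filter.mp hp).2]
  rw [step1, Finset.sum_congr rfl step2,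
    Finset.sum_fiberwise_of_maps_to (fun p hp => Finset.mem_image_of_mem _ hp)]

lemma sIntegral_add (hf : IsSimpleFn 𝒜 f) (hg : IsSimpleFn 𝒜 g) :
    sIntegral μ (fun x => f x + g x) = sIntegral μ f + sIntegral μ g := by
  obtain ⟨hffin, hfpre⟩ := (hμ.isSimpleFn_iff f).mp hf
  obtain ⟨hgfin, hgpre⟩ := (hμ.isSimpleFn_iff g).mp hg
  have h1 := hμ.sIntegral_op2 hffin hgfin hfpre hgpre (fun a b => a + b)
  have h2 := hμ.sIntegral_op2 hffin hgfin hfpre hgpre (fun a _ => a)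
  have h3 := hμ.sIntegral_op2 hffin hgfin hfpre hgpre (fun _ b => b)
  have e2 : sIntegral μ (fun x => f x) = sIntegral μ f := rfl
  have e3 : sIntegral μ (fun x => g x) = sIntegral μ g := rfl
  rw [e2] at h2; rw [e3] at h3
  rw [h1, h2, h3, ← Finset.sum_add_distrib]
  exact Finset.sum_congr rfl fun p _ => by ring

lemma sIntegral_sub (hf : IsSimpleFn 𝒜 f) (hg : IsSimpleFn 𝒜 g) :
    sIntegral μ (fun x => f x - g x) = sIntegral μ f - sIntegral μ g := by
  obtain ⟨hffin, hfpre⟩ := (hμ.isSimpleFn_iff f).mp hf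
  obtain ⟨hgfin, hgpre⟩ := (hμ.isSimpleFn_iff g).mp hg
  have h1 := hμ.sIntegral_op2 hffin hgfin hfpre hgpre (fun a b => a - b)
  have h2 := hμ.sIntegral_op2 hffin hgfin hfpre hgpre (fun a _ => a)
  have h3 := hμ.sIntegral_op2 hffin hgfin hfpre hgpre (fun _ b => b)
  have e2 : sIntegral μ (fun x => f x) = sIntegral μ f := rfl
  have e3 : sIntegral μ (fun x => g x) = sIntegral μ g := rfl
  rw [e2] at h2; rw [e3] at h3
  rw [h1, h2, h3, ← Finset.sum_sub_distrib]
  exact Finset.sum_congr rfl fun p _ => by ring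

lemma sIntegral_nonneg (hf : IsSimpleFn 𝒜 f) (h0 : ∀ x, 0 ≤ f x) :
    0 ≤ sIntegral μ f := by
  obtain ⟨hffin, hfpre⟩ := (hμ.isSimpleFn_iff f).mp hf
  have h2 := hμ.sIntegral_op2 hffin hffin hfpre hfpre (fun a _ => a)
  have e2 : sIntegral μ (fun x => f x) = sIntegral μ f := rfl
  rw [e2] at h2
  rw [h2]
  refine Finset.sum_nonneg fun p _ => ?_
  by_cases hne : f ⁻¹' {p.1} ∩ f ⁻¹' {p.2} = ∅
  · rw [hne, hμ.empty, mul_zero]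
  · obtain ⟨x, hx, -⟩ := Set.nonempty_iff_ne_empty.mpr hne
    simp only [Set.mem_preimage, Set.mem_singleton_iff] at hx
    exact mul_nonneg (hx ▸ h0 x) (hμ.nonneg _ (hμ.inter_mem (hfpre _) (hfpre _)))

lemma sIntegral_mono (hf : IsSimpleFn 𝒜 f) (hg : IsSimpleFn 𝒜 g) (h : ∀ x, f x ≤ g x) :
    sIntegral μ f ≤ sIntegral μ g := by
  have h1 := hμ.sIntegral_sub hg hf
  have h2 := hμ.sIntegral_nonneg (hμ.simple_op2 hg hf (fun a b => a - b))
    (fun x => sub_nonneg.mpr (h x))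
  rw [h1] at h2
  linarith

lemma sIntegral_indicator {A : Set X} (hA : A ∈ 𝒜) (c : ℝ) :
    sIntegral μ (A.indicator fun _ => c) = c * μ A := by
  classical
  by_cases hc : c = 0
  · subst hc
    have h0 : ∀ y : ℝ, y * μ ((A.indicator fun _ => (0:ℝ)) ⁻¹' {y}) = 0 := by
      intro y
      by_cases hy : y = 0
      · rw [hy, zero_mul]
      · have : (A.indicator fun _ => (0:ℝ)) ⁻¹' {y} = ∅ := by
          ext x
          simp only [Set.mem_preimage, Set.mem_singleton_iff, Set.mem_empty_iff_false,
            iff_false, Set.indicator_apply]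
          split <;> simpa using fun h => hy h.symm
        rw [this, hμ.empty, mul_zero]
    rw [sIntegral, finsum_eq_zero_of_forall_eq_zero h0, zero_mul]
  · have hsingle : ∀ y : ℝ, y ≠ c → y * μ ((A.indicator fun _ => c) ⁻¹' {y}) = 0 := by
      intro y hy
      by_cases hy0 : y = 0
      · rw [hy0, zero_mul]
      · have : (A.indicator fun _ => c) ⁻¹' {y} = ∅ := by
          ext x
          simp only [Set.mem_preimage, Set.mem_singleton_iff, Set.mem_empty_iff_false,
            iff_false, Set.indicator_apply]
          split
          · exact fun h => hy h.symm
          · exact fun h => hy0 h.symm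
        rw [this, hμ.empty, mul_zero]
    have hpre : (A.indicator fun _ => c) ⁻¹' {c} = A := by
      ext x
      by_cases hx : x ∈ A
      · simp [Set.indicator_of_mem hx, hx]
      · simp only [Set.mem_preimage, Set.mem_singleton_iff, Set.indicator_of_notMem hx]
        exact iff_of_false (fun h => hc h.symm) hx
    rw [sIntegral, finsum_eq_single _ c hsingle, hpre]

lemma sIntegral_const (c : ℝ) :
    sIntegral μ (fun _ : X => c) = c * μ Set.univ := by
  have := hμ.sIntegral_indicator hμ.univ_mem c
  rwa [Set.indicator_univ] at this

lemma sIntegral_zero : sIntegral μ (fun _ : X => (0:ℝ)) = 0 := by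
  rw [hμ.sIntegral_const, zero_mul]

lemma abs_sIntegral_le (hf : IsSimpleFn 𝒜 f) :
    |sIntegral μ f| ≤ sIntegral μ (fun x => |f x|) := by
  have habs : IsSimpleFn 𝒜 (fun x => |f x|) := by
    have := hμ.simple_op2 hf hf (fun a _ => |a|)
    exact this
  rw [abs_le]
  constructor
  · have h1 : sIntegral μ (fun x => (fun _ : X => (0:ℝ)) x - f x) =
        sIntegral μ (fun _ : X => (0:ℝ)) - sIntegral μ f :=
      hμ.sIntegral_sub (hμ.simple_const 0) hf
    have h2 : sIntegral μ (fun x => (fun _ : X => (0:ℝ)) x - f x) ≤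
        sIntegral μ (fun x => |f x|) := by
      refine hμ.sIntegral_mono (hμ.simple_op2 (hμ.simple_const 0) hf (fun a b => a - b))
        habs fun x => ?_
      rw [zero_sub]
      exact neg_le_abs _
    rw [h1, hμ.sIntegral_zero] at h2
    linarith
  · exact hμ.sIntegral_mono hf habs fun x => le_abs_self _

lemma sIntegral_cheb {t : ℝ} (hf : IsSimpleFn 𝒜 f) (h0 : ∀ x, 0 ≤ f x) (ht : 0 < t) :
    t * μ {x | t < f x} ≤ sIntegral μ f := by
  have hE : {x | t < f x} ∈ 𝒜 := hμ.simple_preimage_Ioi hf t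
  have h1 := hμ.sIntegral_indicator hE t
  have h2 : sIntegral μ (({x | t < f x}).indicator fun _ => t) ≤ sIntegral μ f := by
    refine hμ.sIntegral_mono (hμ.simple_indicator hE t) hf fun x => ?_
    by_cases hx : x ∈ {x | t < f x}
    · rw [Set.indicator_of_mem hx]; exact le_of_lt hx
    · rw [Set.indicator_of_notMem hx]; exact h0 x
  rw [h1] at h2
  exact h2

end IsCharge

end SIntegral
section L1Core

open Set Function Filter Topology

variable {X : Type*} {𝒜 : Set (Set X)} {μ : Set X → ℝ} {f g : X → ℝ} {fn gn : ℕ → X → ℝ}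

namespace IsCharge

variable (hμ : IsCharge 𝒜 μ)
include hμ

lemma simple_bounded (hf : IsSimpleFn 𝒜 f) : ∃ M, 0 ≤ M ∧ ∀ x, |f x| ≤ M := by
  obtain ⟨M, hM⟩ := ((IsSimpleFn.range_finite hμ hf).image abs).bddAbove
  exact ⟨max M 0, le_max_right _ _, fun x =>
    le_trans (hM (Set.mem_image_of_mem abs (Set.mem_range_self x))) (le_max_left _ _)⟩

lemma cauchy_extract
    (hd : Tendsto (fun mn : ℕ × ℕ => sIntegral μ (fun x => |fn mn.1 x - fn mn.2 x|))
      atTop (𝓝 0)) {ε : ℝ} (hε : 0 < ε) :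
    ∃ N, ∀ m ≥ N, ∀ n ≥ N, sIntegral μ (fun x => |fn m x - fn n x|) < ε := by
  have h := NormedAddCommGroup.tendsto_nhds_zero.mp hd ε hε
  rw [Filter.eventually_atTop] at h
  obtain ⟨a, ha⟩ := h
  refine ⟨max a.1 a.2, fun m hm n hn => ?_⟩
  have := ha (m, n) ⟨le_trans (le_max_left _ _) hm, le_trans (le_max_right _ _) hn⟩
  calc sIntegral μ (fun x => |fn m x - fn n x|)
      ≤ ‖sIntegral μ (fun x => |fn m x - fn n x|)‖ := le_abs_self _
    _ < ε := this

lemma integral_cauchySeq (hfn : IsDetermining 𝒜 μ fn f) :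
    ∃ L, Tendsto (fun n => sIntegral μ (fn n)) atTop (𝓝 L) := by
  obtain ⟨hs, -, hd⟩ := hfn
  suffices h : CauchySeq (fun n => sIntegral μ (fn n)) by
    exact cauchySeq_tendsto_of_complete h
  rw [Metric.cauchySeq_iff]
  intro ε hε
  obtain ⟨N, hN⟩ := hμ.cauchy_extract hd hε
  refine ⟨N, fun m hm n hn => ?_⟩
  rw [Real.dist_eq]
  calc |sIntegral μ (fn m) - sIntegral μ (fn n)|
      = |sIntegral μ (fun x => fn m x - fn n x)| := by rw [hμ.sIntegral_sub (hs m) (hs n)]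
    _ ≤ sIntegral μ (fun x => |fn m x - fn n x|) := hμ.abs_sIntegral_le
        (hμ.simple_op2 (hs m) (hs n) (fun a b => a - b))
    _ < ε := hN m hm n hn

/-- Key lemma: a mean-Cauchy sequence of simple functions converging hazily to zero
converges to zero in mean. -/
lemma key_null (hs : ∀ n, IsSimpleFn 𝒜 (fn n))
    (hhazy : HazyConv 𝒜 μ fn (fun _ => 0))
    (hd : Tendsto (fun mn : ℕ × ℕ => sIntegral μ (fun x => |fn mn.1 x - fn mn.2 x|))
      atTop (𝓝 0)) :
    Tendsto (fun n => sIntegral μ (fun x => |fn n x|)) atTop (𝓝 0) := by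
  rw [NormedAddCommGroup.tendsto_nhds_zero]
  intro ε hε
  have hμuniv : 0 ≤ μ Set.univ := hμ.nonneg _ hμ.univ_mem
  set ε' := ε / 8 with hε'
  have hε'pos : 0 < ε' := by positivity
  obtain ⟨K, hK⟩ := hμ.cauchy_extract hd hε'pos
  set δ := ε' / (μ Set.univ + 1) with hδ
  have hδpos : 0 < δ := by positivity
  -- bound for the fixed index K
  obtain ⟨M, hM0, hM⟩ := hμ.simple_bounded (hs K)
  have habs : ∀ n, IsSimpleFn 𝒜 (fun x => |fn n x|) := fun n =>
    hμ.simple_op2 (hs n) (hs n) (fun a _ => |a|)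
  have hEmem : ∀ n, {x | δ < |fn n x|} ∈ 𝒜 := fun n =>
    hμ.simple_preimage_Ioi (habs n) δ
  have hKbound : ∀ n ≥ K, sIntegral μ (fun x => |fn K x|) ≤
      2 * ε' + δ * μ Set.univ + M * μ {x | δ < |fn n x|} := by
    intro n hn
    set E := {x | δ < |fn n x|} with hE
    have hdiff : IsSimpleFn 𝒜 (fun x => |fn K x - fn n x|) :=
      hμ.simple_op2 (hs K) (hs n) (fun a b => |a - b|)
    have hind : IsSimpleFn 𝒜 (E.indicator fun _ => M) := hμ.simple_indicator (hEmem n) M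
    have hpoint : ∀ x, |fn K x| ≤
        (|fn K x - fn n x| + |fn K x - fn n x|) + ((fun _ => δ) x +
          (E.indicator fun _ => M) x) := by
      intro x
      by_cases hx : x ∈ E
      · have h2 : |fn K x| ≤ |fn K x - fn n x| + |fn n x| := by
          calc |fn K x| = |fn K x - fn n x + fn n x| := by ring_nf
            _ ≤ |fn K x - fn n x| + |fn n x| := abs_add_le _ _
        have h3 : |fn n x| ≤ |fn n x - fn K x| + M := by
          calc |fn n x| = |fn n x - fn K x + fn K x| := by ring_nf
            _ ≤ |fn n x - fn K x| + |fn K x| := abs_add_le _ _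
            _ ≤ |fn n x - fn K x| + M := by linarith [hM x]
        rw [Set.indicator_of_mem hx]
        have h4 : |fn n x - fn K x| = |fn K x - fn n x| := abs_sub_comm _ _
        simp only
        linarith
      · have hxle : |fn n x| ≤ δ := le_of_not_gt hx
        have h2 : |fn K x| ≤ |fn K x - fn n x| + |fn n x| := by
          calc |fn K x| = |fn K x - fn n x + fn n x| := by ring_nf
            _ ≤ |fn K x - fn n x| + |fn n x| := abs_add_le _ _
        rw [Set.indicator_of_notMem hx]
        simp only
        have := abs_nonneg (fn K x - fn n x)
        linarith
    have hmono := hμ.sIntegral_mono (habs K)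
      (hμ.simple_op2 (hμ.simple_op2 hdiff hdiff (fun a b => a + b))
        (hμ.simple_op2 (hμ.simple_const δ) hind (fun a b => a + b)) (fun a b => a + b))
      hpoint
    have heq1 : sIntegral μ (fun x => (|fn K x - fn n x| + |fn K x - fn n x|) +
        ((fun _ => δ) x + (E.indicator fun _ => M) x)) =
        (sIntegral μ (fun x => |fn K x - fn n x|) + sIntegral μ (fun x => |fn K x - fn n x|)) +
        (δ * μ Set.univ + M * μ E) := by
      rw [hμ.sIntegral_add (hμ.simple_op2 hdiff hdiff (fun a b => a + b))
        (hμ.simple_op2 (hμ.simple_const δ) hind (fun a b => a + b)),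
        hμ.sIntegral_add hdiff hdiff, hμ.sIntegral_add (hμ.simple_const δ) hind,
        hμ.sIntegral_const, hμ.sIntegral_indicator (hEmem n)]
    rw [heq1] at hmono
    have hKn := hK K (le_refl K) n hn
    linarith
  -- the measure of the exceptional set tends to zero
  have hEtend : Tendsto (fun n => μ {x | δ < |fn n x|}) atTop (𝓝 0) := by
    have := hhazy δ hδpos
    have heq : ∀ n, outerCharge 𝒜 μ {x | δ < |fn n x - (fun _ : X => (0:ℝ)) x|} =
        μ {x | δ < |fn n x|} := by
      intro n
      have : {x | δ < |fn n x - (fun _ : X => (0:ℝ)) x|} = {x | δ < |fn n x|} := by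
        ext x; simp
      rw [this, hμ.outer_eq (hEmem n)]
    simpa only [heq] using this
  have hMtend : Tendsto (fun n => M * μ {x | δ < |fn n x|}) atTop (𝓝 0) := by
    simpa using hEtend.const_mul M
  obtain ⟨n, hn1, hn2⟩ := ((hMtend.eventually (eventually_lt_nhds hε'pos)).and
    (eventually_ge_atTop K)).exists
  have hKfinal : sIntegral μ (fun x => |fn K x|) ≤ 4 * ε' := by
    have h1 := hKbound n hn2
    have hδμ : δ * μ Set.univ ≤ ε' := by
      rw [hδ]
      rw [div_mul_eq_mul_div, div_le_iff₀ (by linarith)]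
      nlinarith
    linarith
  rw [Filter.eventually_atTop]
  refine ⟨K, fun n hn => ?_⟩
  have htri : ∀ x, |fn n x| ≤ |fn n x - fn K x| + |fn K x| := by
    intro x
    calc |fn n x| = |fn n x - fn K x + fn K x| := by ring_nf
      _ ≤ |fn n x - fn K x| + |fn K x| := abs_add_le _ _
  have hmono := hμ.sIntegral_mono (habs n)
    (hμ.simple_op2 (hμ.simple_op2 (hs n) (hs K) (fun a b => |a - b|)) (habs K)
      (fun a b => a + b)) htri
  have heq2 : sIntegral μ (fun x => |fn n x - fn K x| + |fn K x|) =
      sIntegral μ (fun x => |fn n x - fn K x|) + sIntegral μ (fun x => |fn K x|) :=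
    hμ.sIntegral_add (hμ.simple_op2 (hs n) (hs K) (fun a b => |a - b|)) (habs K)
  rw [heq2] at hmono
  have hnK := hK n hn K (le_refl K)
  have hnonneg : 0 ≤ sIntegral μ (fun x => |fn n x|) :=
    hμ.sIntegral_nonneg (habs n) (fun x => abs_nonneg _)
  rw [Real.norm_eq_abs, abs_of_nonneg hnonneg]
  calc sIntegral μ (fun x => |fn n x|) ≤ sIntegral μ (fun x => |fn n x - fn K x|) +
        sIntegral μ (fun x => |fn K x|) := hmono
    _ ≤ ε' + 4 * ε' := by linarith
    _ < ε := by rw [hε']; linarith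

end IsCharge

end L1Core
section L1Ops

open Set Function Filter Topology

variable {X : Type*} {𝒜 : Set (Set X)} {μ : Set X → ℝ} {f g : X → ℝ} {fn gn : ℕ → X → ℝ}

namespace IsCharge

variable (hμ : IsCharge 𝒜 μ)
include hμ

lemma sIntegral_smul (hf : IsSimpleFn 𝒜 f) (c : ℝ) :
    sIntegral μ (fun x => c * f x) = c * sIntegral μ f := by
  obtain ⟨hffin, hfpre⟩ := (hμ.isSimpleFn_iff f).mp hf
  have h1 := hμ.sIntegral_op2 hffin hffin hfpre hfpre (fun a _ => c * a)
  have h2 := hμ.sIntegral_op2 hffin hffin hfpre hfpre (fun a _ => a)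
  have e2 : sIntegral μ (fun x => f x) = sIntegral μ f := rfl
  rw [e2] at h2
  rw [h1, h2, Finset.mul_sum]
  exact Finset.sum_congr rfl fun p _ => by ring

lemma determining_comp2 (hfn : IsDetermining 𝒜 μ fn f) (hgn : IsDetermining 𝒜 μ gn g)
    (op : ℝ → ℝ → ℝ) (hlip : ∀ a b a' b', |op a b - op a' b'| ≤ |a - a'| + |b - b'|) :
    IsDetermining 𝒜 μ (fun n x => op (fn n x) (gn n x)) (fun x => op (f x) (g x)) := by
  obtain ⟨hs1, hh1, hd1⟩ := hfn
  obtain ⟨hs2, hh2, hd2⟩ := hgn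
  refine ⟨fun n => hμ.simple_op2 (hs1 n) (hs2 n) op, ?_, ?_⟩
  · intro ε hε
    have hε2 : 0 < ε / 2 := by linarith
    have hsub : ∀ n, {x | ε < |op (fn n x) (gn n x) - op (f x) (g x)|} ⊆
        {x | ε / 2 < |fn n x - f x|} ∪ {x | ε / 2 < |gn n x - g x|} := by
      intro n x hx
      by_contra h
      simp only [Set.mem_union, Set.mem_setOf_eq, not_or, not_lt] at h
      have := hlip (fn n x) (gn n x) (f x) (g x)
      have hx' : ε < |op (fn n x) (gn n x) - op (f x) (g x)| := hx
      linarith [h.1, h.2]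
    refine squeeze_zero (fun n => hμ.outer_nonneg _)
      (fun n => le_trans (hμ.outer_mono (hsub n)) (hμ.outer_union_le _ _)) ?_
    simpa using (hh1 (ε/2) hε2).add (hh2 (ε/2) hε2)
  · refine squeeze_zero (fun mn => hμ.sIntegral_nonneg
      (hμ.simple_op2 (hμ.simple_op2 (hs1 mn.1) (hs2 mn.1) op)
        (hμ.simple_op2 (hs1 mn.2) (hs2 mn.2) op) (fun a b => |a - b|))
      (fun x => abs_nonneg _)) (g := fun mn =>
        sIntegral μ (fun x => |fn mn.1 x - fn mn.2 x|) +
        sIntegral μ (fun x => |gn mn.1 x - gn mn.2 x|)) (fun mn => ?_) ?_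
    · have hpt : ∀ x, |op (fn mn.1 x) (gn mn.1 x) - op (fn mn.2 x) (gn mn.2 x)| ≤
          |fn mn.1 x - fn mn.2 x| + |gn mn.1 x - gn mn.2 x| := fun x => hlip _ _ _ _
      have := hμ.sIntegral_mono (hμ.simple_op2 (hμ.simple_op2 (hs1 mn.1) (hs2 mn.1) op)
        (hμ.simple_op2 (hs1 mn.2) (hs2 mn.2) op) (fun a b => |a - b|))
        (hμ.simple_op2 (hμ.simple_op2 (hs1 mn.1) (hs1 mn.2) (fun a b => |a - b|))
          (hμ.simple_op2 (hs2 mn.1) (hs2 mn.2) (fun a b => |a - b|)) (fun a b => a + b)) hpt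
      rwa [hμ.sIntegral_add (hμ.simple_op2 (hs1 mn.1) (hs1 mn.2) (fun a b => |a - b|))
        (hμ.simple_op2 (hs2 mn.1) (hs2 mn.2) (fun a b => |a - b|))] at this
    · simpa using hd1.add hd2

lemma determining_comp1 (hfn : IsDetermining 𝒜 μ fn f) (φ : ℝ → ℝ)
    (hφ : ∀ a a', |φ a - φ a'| ≤ |a - a'|) :
    IsDetermining 𝒜 μ (fun n x => φ (fn n x)) (fun x => φ (f x)) :=
  hμ.determining_comp2 hfn hfn (fun a _ => φ a)
    (fun a b a' b' => le_trans (hφ a a') (le_add_of_nonneg_right (abs_nonneg _)))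

lemma determining_const {s : X → ℝ} (hs : IsSimpleFn 𝒜 s) :
    IsDetermining 𝒜 μ (fun _ => s) s := by
  refine ⟨fun _ => hs, ?_, ?_⟩
  · intro ε hε
    have h0 : ∀ n : ℕ, outerCharge 𝒜 μ {x | ε < |s x - s x|} = 0 := by
      intro n
      have : {x | ε < |s x - s x|} = ∅ := by
        ext x; simp; linarith
      rw [this, hμ.outer_empty]
    have heq : (fun _ : ℕ => outerCharge 𝒜 μ {x | ε < |s x - s x|}) = fun _ => (0:ℝ) :=
      funext h0
    rw [show (fun _ : ℕ => outerCharge 𝒜 μ {x | ε < |s x - s x|}) = fun _ => (0:ℝ) from heq]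
    exact tendsto_const_nhds
  · have h0 : sIntegral μ (fun x => |s x - s x|) = 0 := by
      have : (fun x => |s x - s x|) = fun _ : X => (0:ℝ) := by
        funext x; simp
      rw [this, hμ.sIntegral_zero]
    rw [show (fun _ : ℕ × ℕ => sIntegral μ (fun x => |s x - s x|)) = fun _ => (0:ℝ) from
      funext fun _ => h0]
    exact tendsto_const_nhds

lemma determining_unique (hfn : IsDetermining 𝒜 μ fn f) (hgn : IsDetermining 𝒜 μ gn f)
    {L L' : ℝ} (hL : Tendsto (fun n => sIntegral μ (fn n)) atTop (𝓝 L))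
    (hL' : Tendsto (fun n => sIntegral μ (gn n)) atTop (𝓝 L')) : L = L' := by
  have hD := hμ.determining_comp2 hfn hgn (fun a b => a - b)
    (fun a b a' b' => by
      have : a - b - (a' - b') = (a - a') - (b - b') := by ring
      rw [this]; exact abs_sub _ _)
  obtain ⟨hs, hh, hd⟩ := hD
  have hzero : (fun x => f x - f x) = fun _ : X => (0:ℝ) := by funext x; simp
  rw [hzero] at hh
  have hnull := hμ.key_null hs hh hd
  have hsubt : Tendsto (fun n => sIntegral μ (fn n) - sIntegral μ (gn n)) atTop (𝓝 0) := by
    refine squeeze_zero_norm (fun n => ?_) hnull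
    rw [Real.norm_eq_abs, ← hμ.sIntegral_sub (hfn.1 n) (hgn.1 n)]
    exact hμ.abs_sIntegral_le (hμ.simple_op2 (hfn.1 n) (hgn.1 n) (fun a b => a - b))
  have := tendsto_nhds_unique (hL.sub hL') hsubt
  linarith [this]

lemma tendsto_chargeIntegral (hfn : IsDetermining 𝒜 μ fn f) :
    Tendsto (fun n => sIntegral μ (fn n)) atTop (𝓝 (chargeIntegral 𝒜 μ f)) := by
  have hmem : ∃ gn : ℕ → X → ℝ, IsDetermining 𝒜 μ gn f := ⟨fn, hfn⟩
  obtain ⟨L, hL⟩ := hμ.integral_cauchySeq hfn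
  obtain ⟨L', hL'⟩ := hμ.integral_cauchySeq hmem.choose_spec
  have hCI : chargeIntegral 𝒜 μ f = L' := by
    rw [chargeIntegral, dif_pos hmem]
    exact hL'.limUnder_eq
  rw [hCI, ← hμ.determining_unique hfn hmem.choose_spec hL hL']
  exact hL

lemma chargeIntegral_simple {s : X → ℝ} (hs : IsSimpleFn 𝒜 s) :
    chargeIntegral 𝒜 μ s = sIntegral μ s :=
  tendsto_nhds_unique (hμ.tendsto_chargeIntegral (hμ.determining_const hs))
    tendsto_const_nhds

lemma memL1_simple {s : X → ℝ} (hs : IsSimpleFn 𝒜 s) : MemL1 𝒜 μ s :=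
  ⟨fun _ => s, hμ.determining_const hs⟩

lemma memL1_comp2 (hf : MemL1 𝒜 μ f) (hg : MemL1 𝒜 μ g) (op : ℝ → ℝ → ℝ)
    (hlip : ∀ a b a' b', |op a b - op a' b'| ≤ |a - a'| + |b - b'|) :
    MemL1 𝒜 μ (fun x => op (f x) (g x)) := by
  obtain ⟨fn', hfn⟩ := hf
  obtain ⟨gn', hgn⟩ := hg
  exact ⟨_, hμ.determining_comp2 hfn hgn op hlip⟩

lemma lip_add : ∀ a b a' b' : ℝ, |a + b - (a' + b')| ≤ |a - a'| + |b - b'| := by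
  intro a b a' b'
  have : a + b - (a' + b') = (a - a') + (b - b') := by ring
  rw [this]; exact abs_add_le _ _

lemma lip_sub : ∀ a b a' b' : ℝ, |a - b - (a' - b')| ≤ |a - a'| + |b - b'| := by
  intro a b a' b'
  have : a - b - (a' - b') = (a - a') - (b - b') := by ring
  rw [this]; exact abs_sub _ _

lemma lip_absdiff : ∀ a b a' b' : ℝ, |(|a - b|) - (|a' - b'|)| ≤ |a - a'| + |b - b'| := by
  intro a b a' b'
  calc |(|a - b|) - (|a' - b'|)| ≤ |a - b - (a' - b')| := abs_abs_sub_abs_le_abs_sub _ _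
    _ ≤ |a - a'| + |b - b'| := hμ.lip_sub a b a' b'

lemma memL1_add (hf : MemL1 𝒜 μ f) (hg : MemL1 𝒜 μ g) : MemL1 𝒜 μ (fun x => f x + g x) :=
  hμ.memL1_comp2 hf hg _ hμ.lip_add

lemma memL1_sub (hf : MemL1 𝒜 μ f) (hg : MemL1 𝒜 μ g) : MemL1 𝒜 μ (fun x => f x - g x) :=
  hμ.memL1_comp2 hf hg _ hμ.lip_sub

lemma memL1_abs (hf : MemL1 𝒜 μ f) : MemL1 𝒜 μ (fun x => |f x|) := by
  obtain ⟨fn', hfn⟩ := hf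
  exact ⟨_, hμ.determining_comp1 hfn abs (fun a a' => abs_abs_sub_abs_le_abs_sub _ _)⟩

lemma determining_smul (hfn : IsDetermining 𝒜 μ fn f) (c : ℝ) :
    IsDetermining 𝒜 μ (fun n x => c * fn n x) (fun x => c * f x) := by
  obtain ⟨hs, hh, hd⟩ := hfn
  refine ⟨fun n => hμ.simple_op2 (hs n) (hs n) (fun a _ => c * a), ?_, ?_⟩
  · intro ε hε
    have hc1 : (0:ℝ) < |c| + 1 := by positivity
    have hsub : ∀ n, {x | ε < |c * fn n x - c * f x|} ⊆
        {x | ε / (|c| + 1) < |fn n x - f x|} := by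
      intro n x hx
      simp only [Set.mem_setOf_eq] at hx ⊢
      have h1 : |c * fn n x - c * f x| = |c| * |fn n x - f x| := by
        rw [← abs_mul]; ring_nf
      rw [h1] at hx
      rw [div_lt_iff₀ hc1]
      nlinarith [abs_nonneg c, abs_nonneg (fn n x - f x)]
    exact squeeze_zero (fun n => hμ.outer_nonneg _)
      (fun n => hμ.outer_mono (hsub n)) (hh _ (by positivity))
  · have heq : ∀ mn : ℕ × ℕ, sIntegral μ (fun x => |c * fn mn.1 x - c * fn mn.2 x|) =
        |c| * sIntegral μ (fun x => |fn mn.1 x - fn mn.2 x|) := by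
      intro mn
      have h1 : (fun x => |c * fn mn.1 x - c * fn mn.2 x|) =
          fun x => |c| * |fn mn.1 x - fn mn.2 x| := by
        funext x; rw [← abs_mul]; ring_nf
      rw [h1, hμ.sIntegral_smul (hμ.simple_op2 (hs mn.1) (hs mn.2) (fun a b => |a - b|)) |c|]
    simp only [heq]
    simpa using hd.const_mul |c|

lemma memL1_smul (hf : MemL1 𝒜 μ f) (c : ℝ) : MemL1 𝒜 μ (fun x => c * f x) := by
  obtain ⟨fn', hfn⟩ := hf
  exact ⟨_, hμ.determining_smul hfn c⟩

lemma chargeIntegral_add (hf : MemL1 𝒜 μ f) (hg : MemL1 𝒜 μ g) :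
    chargeIntegral 𝒜 μ (fun x => f x + g x) =
      chargeIntegral 𝒜 μ f + chargeIntegral 𝒜 μ g := by
  obtain ⟨fn', hfn⟩ := hf
  obtain ⟨gn', hgn⟩ := hg
  have t1 := hμ.tendsto_chargeIntegral hfn
  have t2 := hμ.tendsto_chargeIntegral hgn
  have t3 := hμ.tendsto_chargeIntegral (hμ.determining_comp2 hfn hgn _ hμ.lip_add)
  have heq : (fun n => sIntegral μ (fun x => fn' n x + gn' n x)) =
      fun n => sIntegral μ (fn' n) + sIntegral μ (gn' n) :=
    funext fun n => hμ.sIntegral_add (hfn.1 n) (hgn.1 n)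
  rw [heq] at t3
  exact tendsto_nhds_unique t3 (t1.add t2)

lemma chargeIntegral_sub (hf : MemL1 𝒜 μ f) (hg : MemL1 𝒜 μ g) :
    chargeIntegral 𝒜 μ (fun x => f x - g x) =
      chargeIntegral 𝒜 μ f - chargeIntegral 𝒜 μ g := by
  obtain ⟨fn', hfn⟩ := hf
  obtain ⟨gn', hgn⟩ := hg
  have t1 := hμ.tendsto_chargeIntegral hfn
  have t2 := hμ.tendsto_chargeIntegral hgn
  have t3 := hμ.tendsto_chargeIntegral (hμ.determining_comp2 hfn hgn _ hμ.lip_sub)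
  have heq : (fun n => sIntegral μ (fun x => fn' n x - gn' n x)) =
      fun n => sIntegral μ (fn' n) - sIntegral μ (gn' n) :=
    funext fun n => hμ.sIntegral_sub (hfn.1 n) (hgn.1 n)
  rw [heq] at t3
  exact tendsto_nhds_unique t3 (t1.sub t2)

lemma chargeIntegral_nonneg (hf : MemL1 𝒜 μ f) (h0 : ∀ x, 0 ≤ f x) :
    0 ≤ chargeIntegral 𝒜 μ f := by
  obtain ⟨fn', hfn⟩ := hf
  have habs := hμ.determining_comp1 hfn abs (fun a a' => abs_abs_sub_abs_le_abs_sub _ _)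
  have heq : (fun x => |f x|) = f := funext fun x => abs_of_nonneg (h0 x)
  rw [heq] at habs
  have t := hμ.tendsto_chargeIntegral habs
  exact ge_of_tendsto' t fun n => hμ.sIntegral_nonneg
    (hμ.simple_op2 (hfn.1 n) (hfn.1 n) (fun a _ => |a|)) (fun x => abs_nonneg _)

lemma chargeIntegral_mono (hf : MemL1 𝒜 μ f) (hg : MemL1 𝒜 μ g) (h : ∀ x, f x ≤ g x) :
    chargeIntegral 𝒜 μ f ≤ chargeIntegral 𝒜 μ g := by
  have h1 := hμ.chargeIntegral_sub hg hf
  have h2 := hμ.chargeIntegral_nonneg (hμ.memL1_sub hg hf)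
    (fun x => sub_nonneg.mpr (h x))
  rw [h1] at h2
  linarith

lemma outer_cheb (hf : MemL1 𝒜 μ f) (h0 : ∀ x, 0 ≤ f x) {t s : ℝ} (hs : 0 < s)
    (hst : s < t) :
    outerCharge 𝒜 μ {x | t < f x} ≤ chargeIntegral 𝒜 μ f / s := by
  obtain ⟨fn', hfn⟩ := hf
  obtain ⟨hsim, hhazy, hd⟩ := hfn
  set δ := t - s with hδ
  have hδpos : 0 < δ := by rw [hδ]; linarith
  have habsmem : ∀ n, {x | s < |fn' n x|} ∈ 𝒜 := fun n =>
    hμ.simple_preimage_Ioi (hμ.simple_op2 (hsim n) (hsim n) (fun a _ => |a|)) s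
  have hb : ∀ n, outerCharge 𝒜 μ {x | t < f x} ≤
      sIntegral μ (fun x => |fn' n x|) / s + outerCharge 𝒜 μ {x | δ < |fn' n x - f x|} := by
    intro n
    have hsub : {x | t < f x} ⊆ {x | s < |fn' n x|} ∪ {x | δ < |fn' n x - f x|} := by
      intro x hx
      by_contra h
      simp only [Set.mem_union, Set.mem_setOf_eq, not_or, not_lt] at h
      have hx' : t < f x := hx
      have h1 : f x ≤ |f x - fn' n x| + |fn' n x| := by
        calc f x ≤ |f x| := le_abs_self _
          _ = |f x - fn' n x + fn' n x| := by ring_nf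
          _ ≤ |f x - fn' n x| + |fn' n x| := abs_add_le _ _
      rw [abs_sub_comm] at h1
      linarith [h.1, h.2]
    have h2 : μ {x | s < |fn' n x|} ≤ sIntegral μ (fun x => |fn' n x|) / s := by
      rw [le_div_iff₀ hs]
      calc μ {x | s < |fn' n x|} * s = s * μ {x | s < |fn' n x|} := by ring
        _ ≤ sIntegral μ (fun x => |fn' n x|) :=
          hμ.sIntegral_cheb (hμ.simple_op2 (hsim n) (hsim n) (fun a _ => |a|))
            (fun x => abs_nonneg _) hs
    calc outerCharge 𝒜 μ {x | t < f x} ≤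
        outerCharge 𝒜 μ ({x | s < |fn' n x|} ∪ {x | δ < |fn' n x - f x|}) :=
          hμ.outer_mono hsub
      _ ≤ outerCharge 𝒜 μ {x | s < |fn' n x|} +
          outerCharge 𝒜 μ {x | δ < |fn' n x - f x|} := hμ.outer_union_le _ _
      _ ≤ _ := by
          rw [hμ.outer_eq (habsmem n)]
          linarith [h2]
  have habsdet := hμ.determining_comp1 ⟨hsim, hhazy, hd⟩ abs
    (fun a a' => abs_abs_sub_abs_le_abs_sub _ _)
  have heqf : (fun x => |f x|) = f := funext fun x => abs_of_nonneg (h0 x)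
  rw [heqf] at habsdet
  have t1 := (hμ.tendsto_chargeIntegral habsdet).div_const s
  have t2 := hhazy δ hδpos
  have total := t1.add t2
  rw [add_zero] at total
  exact ge_of_tendsto' total hb

end IsCharge

end L1Ops
section L1More

open Set Function Filter Topology

variable {X : Type*} {𝒜 : Set (Set X)} {μ : Set X → ℝ} {f g : X → ℝ} {fn gn : ℕ → X → ℝ}

lemma exists_Ioo_not_mem {C : Set ℝ} (hC : C.Countable) {a b : ℝ} (hab : a < b) :
    ∃ z, a < z ∧ z < b ∧ z ∉ C := by
  by_contra h
  push_neg at h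
  have hsub : Set.Ioo a b ⊆ C := fun z hz => h z hz.1 hz.2
  have hcnt : (Set.Ioo a b).Countable := hC.mono hsub
  have h1 := hcnt.le_aleph0
  rw [Cardinal.mk_Ioo_real hab] at h1
  exact Cardinal.aleph0_lt_continuum.not_ge h1

namespace IsCharge

variable (hμ : IsCharge 𝒜 μ)
include hμ

lemma tendsto_integral_dist (hfn : IsDetermining 𝒜 μ fn f) :
    Tendsto (fun k => chargeIntegral 𝒜 μ (fun x => |fn k x - f x|)) atTop (𝓝 0) := by
  rw [NormedAddCommGroup.tendsto_nhds_zero]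
  intro ε hε
  obtain ⟨K, hK⟩ := hμ.cauchy_extract hfn.2.2 (half_pos hε)
  rw [eventually_atTop]
  refine ⟨K, fun k hk => ?_⟩
  have hdet : IsDetermining 𝒜 μ (fun l x => |fn k x - fn l x|) (fun x => |fn k x - f x|) :=
    hμ.determining_comp2 (hμ.determining_const (hfn.1 k)) hfn (fun a b => |a - b|)
      hμ.lip_absdiff
  have t := hμ.tendsto_chargeIntegral hdet
  have hub : chargeIntegral 𝒜 μ (fun x => |fn k x - f x|) ≤ ε / 2 :=
    le_of_tendsto t (eventually_atTop.mpr ⟨K, fun l hl => le_of_lt (hK k hk l hl)⟩)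
  have hlb : 0 ≤ chargeIntegral 𝒜 μ (fun x => |fn k x - f x|) :=
    hμ.chargeIntegral_nonneg ⟨_, hdet⟩ (fun x => abs_nonneg _)
  rw [Real.norm_eq_abs, abs_of_nonneg hlb]
  linarith

lemma memL1_indicator_pjField {A : Set X} (hA : A ∈ pjField 𝒜 μ) :
    MemL1 𝒜 μ (A.indicator fun _ => (1:ℝ)) := by
  have h : ∀ k : ℕ, ∃ B, B ∈ 𝒜 ∧ ∃ C, C ∈ 𝒜 ∧ B ⊆ A ∧ A ⊆ C ∧
      μ (C \ B) < 1 / ((k:ℝ) + 1) := by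
    intro k
    obtain ⟨B, hB, C, hC, h1, h2, h3⟩ := hA (1 / ((k:ℝ) + 1)) (by positivity)
    exact ⟨B, hB, C, hC, h1, h2, h3⟩
  choose B hB C hC hBA hAC hsm using h
  have hCB : ∀ k, C k \ B k ∈ 𝒜 := fun k => hμ.diff_mem (hC k) (hB k)
  have hCBn : ∀ k, 0 ≤ μ (C k \ B k) := fun k => hμ.nonneg _ (hCB k)
  refine ⟨fun k => (B k).indicator fun _ => (1:ℝ),
    fun k => hμ.simple_indicator (hB k) 1, ?_, ?_⟩
  · intro ε hε
    have hsub : ∀ k, {x | ε < |(B k).indicator (fun _ => (1:ℝ)) x -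
        A.indicator (fun _ => (1:ℝ)) x|} ⊆ C k \ B k := by
      intro k x hx
      simp only [Set.mem_setOf_eq] at hx
      by_cases hxB : x ∈ B k
      · rw [Set.indicator_of_mem hxB, Set.indicator_of_mem (hBA k hxB)] at hx
        simp at hx; linarith
      · rw [Set.indicator_of_notMem hxB] at hx
        by_cases hxA : x ∈ A
        · exact ⟨hAC k hxA, hxB⟩
        · rw [Set.indicator_of_notMem hxA] at hx
          simp at hx; linarith
    refine squeeze_zero (fun k => hμ.outer_nonneg _)
      (fun k => le_trans (hμ.outer_mono (hsub k)) (le_of_eq (hμ.outer_eq (hCB k)))) ?_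
    exact squeeze_zero hCBn (fun k => le_of_lt (hsm k))
      tendsto_one_div_add_atTop_nhds_zero_nat
  · rw [NormedAddCommGroup.tendsto_nhds_zero]
    intro ε hε
    obtain ⟨K, hK⟩ := exists_nat_gt (2 / ε)
    rw [eventually_atTop]
    refine ⟨(K, K), fun mn hmn => ?_⟩
    obtain ⟨hm, hn⟩ := hmn
    set k := mn.1; set l := mn.2
    have hpt : ∀ x, |(B k).indicator (fun _ => (1:ℝ)) x - (B l).indicator (fun _ => (1:ℝ)) x|
        ≤ (C k \ B k).indicator (fun _ => (1:ℝ)) x + (C l \ B l).indicator (fun _ => (1:ℝ)) x := by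
      intro x
      have hind : ∀ (S : Set X), (0:ℝ) ≤ S.indicator (fun _ => (1:ℝ)) x := fun S =>
        Set.indicator_nonneg (fun _ _ => zero_le_one) x
      by_cases hk' : x ∈ B k <;> by_cases hl' : x ∈ B l
      · rw [Set.indicator_of_mem hk', Set.indicator_of_mem hl']
        simpa using add_nonneg (hind _) (hind _)
      · rw [Set.indicator_of_mem hk', Set.indicator_of_notMem hl',
          Set.indicator_of_mem (show x ∈ C l \ B l from ⟨hAC l (hBA k hk'), hl'⟩)]
        simp only [sub_zero, abs_one]
        linarith [hind (C k \ B k)]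
      · rw [Set.indicator_of_notMem hk', Set.indicator_of_mem hl',
          Set.indicator_of_mem (show x ∈ C k \ B k from ⟨hAC k (hBA l hl'), hk'⟩)]
        simp only [zero_sub, abs_neg, abs_one]
        linarith [hind (C l \ B l)]
      · rw [Set.indicator_of_notMem hk', Set.indicator_of_notMem hl']
        simpa using add_nonneg (hind _) (hind _)
    have hint : sIntegral μ (fun x => |(B k).indicator (fun _ => (1:ℝ)) x -
        (B l).indicator (fun _ => (1:ℝ)) x|) ≤ μ (C k \ B k) + μ (C l \ B l) := by
      have hm1 := hμ.sIntegral_mono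
        (hμ.simple_op2 (hμ.simple_indicator (hB k) 1) (hμ.simple_indicator (hB l) 1)
          (fun a b => |a - b|))
        (hμ.simple_op2 (hμ.simple_indicator (hCB k) 1) (hμ.simple_indicator (hCB l) 1)
          (fun a b => a + b)) hpt
      rwa [hμ.sIntegral_add (hμ.simple_indicator (hCB k) 1) (hμ.simple_indicator (hCB l) 1),
        hμ.sIntegral_indicator (hCB k), hμ.sIntegral_indicator (hCB l), one_mul, one_mul]
        at hm1
    have hKpos : (0:ℝ) < K := lt_of_lt_of_le (by positivity) (le_of_lt hK)
    have harith : ∀ j : ℕ, K ≤ j → μ (C j \ B j) < 1 / ((K:ℝ) + 1) := by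
      intro j hj
      refine lt_of_lt_of_le (hsm j) ?_
      apply one_div_le_one_div_of_le (by positivity)
      have : (K:ℝ) ≤ j := Nat.cast_le.mpr hj
      linarith
    have hval : sIntegral μ (fun x => |(B k).indicator (fun _ => (1:ℝ)) x -
        (B l).indicator (fun _ => (1:ℝ)) x|) < ε := by
      have h1 := harith k hm
      have h2 := harith l hn
      have h3 : 2 / ((K:ℝ) + 1) < ε := by
        rw [div_lt_iff₀ (by positivity)]
        rw [div_lt_iff₀ hε] at hK
        nlinarith
      calc sIntegral μ _ ≤ μ (C k \ B k) + μ (C l \ B l) := hint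
        _ < 1 / ((K:ℝ) + 1) + 1 / ((K:ℝ) + 1) := by linarith
        _ = 2 / ((K:ℝ) + 1) := by ring
        _ < ε := h3
    have hnn : 0 ≤ sIntegral μ (fun x => |(B k).indicator (fun _ => (1:ℝ)) x -
        (B l).indicator (fun _ => (1:ℝ)) x|) :=
      hμ.sIntegral_nonneg (hμ.simple_op2 (hμ.simple_indicator (hB k) 1)
        (hμ.simple_indicator (hB l) 1) (fun a b => |a - b|)) (fun x => abs_nonneg _)
    rw [Real.norm_eq_abs, abs_of_nonneg hnn]
    exact hval

/-- Cut lemma: a hazy limit of simple functions has all but countably many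
upper level sets in the Peano-Jordan completion. -/
lemma cut_pjField (hs : ∀ n, IsSimpleFn 𝒜 (fn n)) (hh : HazyConv 𝒜 μ fn f) :
    ∃ C : Set ℝ, C.Countable ∧ ∀ y ∉ C, f ⁻¹' Set.Ioi y ∈ pjField 𝒜 μ := by
  set F : ℝ → ℝ := fun y => outerCharge 𝒜 μ {x | y < f x} with hF
  have hFanti : Antitone F := by
    intro y z hyz
    exact hμ.outer_mono (fun x hx => lt_of_le_of_lt hyz hx)
  refine ⟨{y | ¬ContinuousAt F y}, hFanti.countable_not_continuousAt, ?_⟩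
  intro y hy
  have hcont : ContinuousAt F y := not_not.mp hy
  intro η hη
  -- choose ε with small oscillation
  obtain ⟨d, hd, hosc⟩ := Metric.continuousAt_iff.mp hcont (η/8) (by linarith)
  set ε := d / 3 with hε
  have hεpos : 0 < ε := by rw [hε]; linarith
  have hosc1 : |F (y - 2*ε) - F y| < η/8 := by
    apply hosc
    rw [Real.dist_eq]
    rw [hε]
    rw [abs_of_nonpos (by linarith)]
    linarith
  have hosc2 : |F (y + 2*ε) - F y| < η/8 := by
    apply hosc
    rw [Real.dist_eq, hε, abs_of_nonneg (by linarith)]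
    linarith
  have hoscT : F (y - 2*ε) - F (y + 2*ε) < η/4 := by
    rw [abs_lt] at hosc1 hosc2
    linarith [hosc1.1, hosc1.2, hosc2.1, hosc2.2]
  -- choose n with small exceptional set
  have hhε := hh ε hεpos
  obtain ⟨n, hn⟩ := (hhε.eventually (eventually_lt_nhds (show (0:ℝ) < η/8 by linarith))).exists
  -- cover the exceptional set
  obtain ⟨G, hG, hEG, hGsmall⟩ := hμ.exists_cover
    (A := {x | ε < |fn n x - f x|}) (show (0:ℝ) < η/8 by linarith)
  have hGbound : μ G < η/4 := by
    calc μ G < outerCharge 𝒜 μ {x | ε < |fn n x - f x|} + η/8 := hGsmall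
      _ < η/8 + η/8 := by linarith
      _ = η/4 := by ring
  have hGnonneg : 0 ≤ μ G := hμ.nonneg _ hG
  -- the approximating sets
  have hS1 : {x | y + ε < fn n x} ∈ 𝒜 := hμ.simple_preimage_Ioi (hs n) _
  have hS2 : {x | y - ε < fn n x} ∈ 𝒜 := hμ.simple_preimage_Ioi (hs n) _
  refine ⟨{x | y + ε < fn n x} \ G, hμ.diff_mem hS1 hG,
    {x | y - ε < fn n x} ∪ G, hμ.union_mem hS2 hG, ?_, ?_, ?_⟩
  · rintro x ⟨hx1, hx2⟩
    have hnotE : x ∉ {x | ε < |fn n x - f x|} := fun hE => hx2 (hEG hE)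
    simp only [Set.mem_setOf_eq, not_lt] at hnotE hx1
    simp only [Set.mem_preimage, Set.mem_Ioi]
    have := abs_le.mp hnotE
    have hx1' : y + ε < fn n x := hx1
    linarith [this.1, this.2]
  · intro x hx
    simp only [Set.mem_preimage, Set.mem_Ioi] at hx
    by_cases hxG : x ∈ G
    · exact Or.inr hxG
    · left
      have hnotE : x ∉ {x | ε < |fn n x - f x|} := fun hE => hxG (hEG hE)
      simp only [Set.mem_setOf_eq, not_lt] at hnotE
      have := abs_le.mp hnotE
      simp only [Set.mem_setOf_eq]
      linarith [this.1, this.2]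
  · -- measure estimate
    set D := {x | y - ε < fn n x} \ {x | y + ε < fn n x} with hD
    have hDmem : D ∈ 𝒜 := hμ.diff_mem hS2 hS1
    have hsub : ({x | y - ε < fn n x} ∪ G) \ ({x | y + ε < fn n x} \ G) ⊆ D ∪ G := by
      rintro x ⟨hx1, hx2⟩
      by_cases hxG : x ∈ G
      · exact Or.inr hxG
      · left
        rcases hx1 with hx1 | hx1
        · refine ⟨hx1, fun hx3 => hx2 ⟨hx3, hxG⟩⟩
        · exact absurd hx1 hxG
    have hm1 : μ (({x | y - ε < fn n x} ∪ G) \ ({x | y + ε < fn n x} \ G)) ≤ μ D + μ G := by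
      calc μ _ ≤ μ (D ∪ G) := hμ.mono (hμ.diff_mem (hμ.union_mem hS2 hG)
            (hμ.diff_mem hS1 hG)) (hμ.union_mem hDmem hG) hsub
        _ ≤ μ D + μ G := hμ.subadd hDmem hG
    -- μ D = μ {y-ε<fn} - μ {y+ε<fn}
    have hnested : {x | y + ε < fn n x} ⊆ {x | y - ε < fn n x} := by
      intro x hx
      simp only [Set.mem_setOf_eq] at hx ⊢
      linarith
    have hDeq : μ D = μ {x | y - ε < fn n x} - μ {x | y + ε < fn n x} := by
      have hadd : μ (D ∪ {x | y + ε < fn n x}) = μ D + μ {x | y + ε < fn n x} :=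
        hμ.additive D hDmem _ hS1 Set.disjoint_sdiff_left
      have hun : D ∪ {x | y + ε < fn n x} = {x | y - ε < fn n x} :=
        Set.diff_union_of_subset hnested
      rw [hun] at hadd
      linarith
    -- relate to F
    have hb1 : μ {x | y - ε < fn n x} ≤ F (y - 2*ε) + μ G := by
      have hsub1 : {x | y - ε < fn n x} ⊆ {x | y - 2*ε < f x} ∪ G := by
        intro x hx
        by_cases hxG : x ∈ G
        · exact Or.inr hxG
        · left
          have hnotE : x ∉ {x | ε < |fn n x - f x|} := fun hE => hxG (hEG hE)
          simp only [Set.mem_setOf_eq, not_lt] at hnotE hx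
          have := abs_le.mp hnotE
          simp only [Set.mem_setOf_eq]
          linarith [this.1, this.2]
      calc μ {x | y - ε < fn n x} = outerCharge 𝒜 μ {x | y - ε < fn n x} :=
            (hμ.outer_eq hS2).symm
        _ ≤ outerCharge 𝒜 μ ({x | y - 2*ε < f x} ∪ G) := hμ.outer_mono hsub1
        _ ≤ outerCharge 𝒜 μ {x | y - 2*ε < f x} + outerCharge 𝒜 μ G :=
            hμ.outer_union_le _ _
        _ = F (y - 2*ε) + μ G := by rw [hμ.outer_eq hG]
    have hb2 : F (y + 2*ε) ≤ μ {x | y + ε < fn n x} + μ G := by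
      have hsub2 : {x | y + 2*ε < f x} ⊆ {x | y + ε < fn n x} ∪ G := by
        intro x hx
        by_cases hxG : x ∈ G
        · exact Or.inr hxG
        · left
          have hnotE : x ∉ {x | ε < |fn n x - f x|} := fun hE => hxG (hEG hE)
          simp only [Set.mem_setOf_eq, not_lt] at hnotE hx
          have := abs_le.mp hnotE
          simp only [Set.mem_setOf_eq]
          linarith [this.1, this.2]
      calc F (y + 2*ε) ≤ outerCharge 𝒜 μ ({x | y + ε < fn n x} ∪ G) :=
            hμ.outer_mono hsub2
        _ ≤ outerCharge 𝒜 μ {x | y + ε < fn n x} + outerCharge 𝒜 μ G :=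
            hμ.outer_union_le _ _
        _ = μ {x | y + ε < fn n x} + μ G := by rw [hμ.outer_eq hS1, hμ.outer_eq hG]
    calc μ (({x | y - ε < fn n x} ∪ G) \ ({x | y + ε < fn n x} \ G)) ≤ μ D + μ G := hm1
      _ = μ {x | y - ε < fn n x} - μ {x | y + ε < fn n x} + μ G := by rw [hDeq]
      _ ≤ (F (y - 2*ε) + μ G) - (F (y + 2*ε) - μ G) + μ G := by linarith
      _ < η := by linarith

end IsCharge

end L1More
section Clamp

open Set Function Filter Topology

variable {X : Type*} {𝒜 : Set (Set X)} {μ : Set X → ℝ} {f g : X → ℝ}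

/-- Abstract layer-sum lemma. -/
lemma layer_sum {z : ℕ → ℝ} {t gap : ℝ} (hmono : ∀ i, z i < z (i + 1))
    (hgap : ∀ i, z (i + 1) - z i ≤ gap) (h0 : z 0 < t) (N : ℕ) :
    (z N < t → z 0 + (∑ i ∈ Finset.range N,
        (z (i + 1) - z i) * (if z (i + 1) < t then 1 else 0)) = z N) ∧
    (t ≤ z N → t - gap ≤ z 0 + (∑ i ∈ Finset.range N,
        (z (i + 1) - z i) * (if z (i + 1) < t then 1 else 0)) ∧
      z 0 + (∑ i ∈ Finset.range N,
        (z (i + 1) - z i) * (if z (i + 1) < t then 1 else 0)) < t) := by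
  induction N with
  | zero =>
      refine ⟨fun _ => by simp, fun ht => absurd (lt_of_lt_of_le h0 ht) (lt_irrefl _)⟩
  | succ N ih =>
      rw [Finset.sum_range_succ]
      by_cases hc : z (N + 1) < t
      · have hzN : z N < t := lt_trans (hmono N) hc
        rw [if_pos hc, mul_one]
        constructor
        · intro _
          have := ih.1 hzN
          linarith
        · intro ht
          exact absurd (lt_of_lt_of_le hc ht) (lt_irrefl _)
      · rw [if_neg hc, mul_zero, add_zero]
        push_neg at hc
        refine ⟨fun h => absurd (lt_of_le_of_lt hc h) (lt_irrefl _), fun _ => ?_⟩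
        by_cases hzN : z N < t
        · have hs := ih.1 hzN
          rw [hs]
          constructor
          · have := hgap N
            linarith
          · exact hzN
        · push_neg at hzN
          exact ih.2 hzN

lemma layer_sum_mem {z : ℕ → ℝ} (hmono : ∀ i, z i < z (i + 1)) (N : ℕ)
    (c : ℕ → ℝ) (hc : ∀ i, c i = 0 ∨ c i = z (i + 1) - z i) :
    z 0 ≤ z 0 + ∑ i ∈ Finset.range N, c i ∧ z 0 + ∑ i ∈ Finset.range N, c i ≤ z N := by
  constructor
  · have : 0 ≤ ∑ i ∈ Finset.range N, c i := by
      refine Finset.sum_nonneg fun i _ => ?_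
      rcases hc i with h | h
      · rw [h]
      · rw [h]; linarith [hmono i]
    linarith
  · have h1 : ∑ i ∈ Finset.range N, c i ≤ ∑ i ∈ Finset.range N, (z (i + 1) - z i) := by
      refine Finset.sum_le_sum fun i _ => ?_
      rcases hc i with h | h
      · rw [h]; linarith [hmono i]
      · rw [h]
    have h2 : ∑ i ∈ Finset.range N, (z (i + 1) - z i) = z N - z 0 :=
      Finset.sum_range_sub z N
    linarith

namespace IsCharge

variable (hμ : IsCharge 𝒜 μ)
include hμ

lemma simple_finset_sum {ι : Type*} (s : Finset ι) (F : ι → X → ℝ)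
    (hF : ∀ i ∈ s, IsSimpleFn 𝒜 (F i)) : IsSimpleFn 𝒜 (fun x => ∑ i ∈ s, F i x) := by
  classical
  induction s using Finset.induction_on with
  | empty => simpa using hμ.simple_const 0
  | @insert a s ha ih =>
      have h1 : (fun x => ∑ i ∈ insert a s, F i x) =
          fun x => F a x + ∑ i ∈ s, F i x := by
        funext x; rw [Finset.sum_insert ha]
      rw [h1]
      exact hμ.simple_op2 (hF a (Finset.mem_insert_self a s))
        (ih fun i hi => hF i (Finset.mem_insert_of_mem hi)) (fun a b => a + b)

lemma le_sum_biUnion {ι : Type*} (s : Finset ι) {B : ι → Set X}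
    (hB : ∀ i ∈ s, B i ∈ 𝒜) : μ (⋃ i ∈ s, B i) ≤ ∑ i ∈ s, μ (B i) := by
  classical
  induction s using Finset.induction_on with
  | empty => simp [hμ.empty]
  | @insert a s ha ih =>
      rw [Finset.set_biUnion_insert, Finset.sum_insert ha]
      calc μ (B a ∪ ⋃ i ∈ s, B i) ≤ μ (B a) + μ (⋃ i ∈ s, B i) :=
            hμ.subadd (hB a (Finset.mem_insert_self a s))
              (hμ.biUnion_mem s fun i hi => hB i (Finset.mem_insert_of_mem hi))
        _ ≤ _ := by
            have := ih fun i hi => hB i (Finset.mem_insert_of_mem hi)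
            linarith

/-- One-step approximation of the clamp of `f` by a simple function. -/
lemma clamp_approx {C : Set ℝ} (hC : C.Countable)
    (hcut : ∀ z ∉ C, f ⁻¹' Set.Ioi z ∈ pjField 𝒜 μ) {y : ℝ} (hy : 0 < y)
    {δ η : ℝ} (hδ : 0 < δ) (hη : 0 < η) :
    ∃ s : X → ℝ, IsSimpleFn 𝒜 s ∧ (∀ x, |s x| ≤ y + δ) ∧
      ∃ G ∈ 𝒜, μ G < η ∧ ∀ x ∉ G, |s x - max (-y) (min y (f x))| ≤ δ := by
  classical
  set δ' := δ / 4 with hδ'def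
  have hδ' : 0 < δ' := by rw [hδ'def]; linarith
  set a := -y - δ' with ha
  set N := ⌈(2 * y + δ') / δ'⌉₊ with hN
  have hNlb : (2 * y + δ') / δ' ≤ (N : ℝ) := Nat.le_ceil _
  have hNub : (N : ℝ) < (2 * y + δ') / δ' + 1 :=
    Nat.ceil_lt_add_one (by positivity)
  -- choose the levels
  have hzex : ∀ i : ℕ, ∃ w, a + i * δ' < w ∧ w < a + (i + 1) * δ' ∧ w ∉ C := by
    intro i
    apply exists_Ioo_not_mem hC
    have : (i : ℝ) * δ' < ((i : ℝ) + 1) * δ' := by nlinarith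
    linarith
  choose z hz1 hz2 hz3 using hzex
  have hzmono : ∀ i, z i < z (i + 1) := by
    intro i
    have h1 := hz2 i
    have h2 := hz1 (i + 1)
    have : a + ((i : ℝ) + 1) * δ' = a + ((i + 1 : ℕ) : ℝ) * δ' := by push_cast; ring
    linarith [this ▸ h1]
  have hzgap : ∀ i, z (i + 1) - z i ≤ 2 * δ' := by
    intro i
    have h1 := hz1 i
    have h2 := hz2 (i + 1)
    have hc : (((i + 1 : ℕ) : ℝ) + 1) * δ' = (i : ℝ) * δ' + 2 * δ' := by push_cast; ring
    linarith [hc ▸ h2]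
  have hz0 : a < z 0 ∧ z 0 < -y := by
    have h1 := hz1 0
    have h2 := hz2 0
    constructor
    · simpa using h1
    · have : a + ((0 : ℕ) + 1 : ℝ) * δ' = -y := by rw [ha]; push_cast; ring
      linarith [this ▸ h2]
  have hz1pos : ∀ i, -y < z (i + 1) := by
    intro i
    have h1 := hz1 (i + 1)
    have hle : (1 : ℝ) ≤ ((i + 1 : ℕ) : ℝ) := by push_cast; linarith [Nat.cast_nonneg (α := ℝ) i]
    have : a + 1 * δ' ≤ a + ((i + 1 : ℕ) : ℝ) * δ' := by nlinarith
    have h2 : a + 1 * δ' = -y := by rw [ha]; ring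
    linarith
  have hzNy : y < z N := by
    have h1 := hz1 N
    have : a + (N : ℝ) * δ' ≥ y := by
      rw [ha]
      have : (2 * y + δ') ≤ (N:ℝ) * δ' := by
        rw [div_le_iff₀ hδ'] at hNlb
        linarith
      linarith
    linarith
  have hzub : ∀ i, i ≤ N → z i < y + 2 * δ' := by
    intro i hi
    have h2 := hz2 i
    have hc : ((i:ℝ) + 1) * δ' ≤ ((N:ℝ) + 1) * δ' := by
      have : (i:ℝ) ≤ (N:ℝ) := Nat.cast_le.mpr hi
      nlinarith
    have hub : a + ((N:ℝ) + 1) * δ' < y + 2 * δ' := by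
      rw [ha]
      have : (N:ℝ) * δ' < 2 * y + δ' + δ' := by
        rw [div_add' _ _ _ (ne_of_gt hδ')] at hNub
        rw [lt_div_iff₀ hδ'] at hNub
        linarith
      linarith
    linarith
  -- choose the approximating sets
  have hBex : ∀ i : ℕ, ∃ B, B ∈ 𝒜 ∧ ∃ Cc, Cc ∈ 𝒜 ∧ B ⊆ f ⁻¹' Set.Ioi (z i) ∧
      f ⁻¹' Set.Ioi (z i) ⊆ Cc ∧ μ (Cc \ B) < η / (N + 1) := by
    intro i
    obtain ⟨B, hB, Cc, hCc, h1, h2, h3⟩ := hcut (z i) (hz3 i) (η / (N + 1))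
      (by positivity)
    exact ⟨B, hB, Cc, hCc, h1, h2, h3⟩
  choose B hB Cc hCc hBsub hCsub hCB using hBex
  set G : Set X := ⋃ i ∈ Finset.range (N + 1), (Cc i \ B i) with hG
  have hGmem : G ∈ 𝒜 := hμ.biUnion_mem _ fun i _ => hμ.diff_mem (hCc i) (hB i)
  have hGsmall : μ G < η := by
    calc μ G ≤ ∑ i ∈ Finset.range (N + 1), μ (Cc i \ B i) :=
          hμ.le_sum_biUnion _ fun i _ => hμ.diff_mem (hCc i) (hB i)
      _ < ∑ _i ∈ Finset.range (N + 1), η / (N + 1) :=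
          Finset.sum_lt_sum_of_nonempty ⟨0, Finset.mem_range.mpr (Nat.succ_pos N)⟩
            fun i _ => hCB i
      _ = η := by
          rw [Finset.sum_const, Finset.card_range, nsmul_eq_mul]
          push_cast
          field_simp
  -- the simple function
  set s : X → ℝ := fun x => z 0 + ∑ i ∈ Finset.range N,
    (B (i + 1)).indicator (fun _ => z (i + 1) - z i) x with hs
  have hssimple : IsSimpleFn 𝒜 s := by
    have h1 : IsSimpleFn 𝒜 (fun x => ∑ i ∈ Finset.range N,
        (B (i + 1)).indicator (fun _ => z (i + 1) - z i) x) :=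
      hμ.simple_finset_sum _ _ fun i _ => hμ.simple_indicator (hB (i + 1)) _
    have h2 : s = fun x => (fun _ : X => z 0) x + (fun x => ∑ i ∈ Finset.range N,
        (B (i + 1)).indicator (fun _ => z (i + 1) - z i) x) x := rfl
    rw [h2]
    exact hμ.simple_op2 (hμ.simple_const (z 0)) h1 (fun a b => a + b)
  have hind_mem : ∀ i x, (B (i+1)).indicator (fun _ => z (i + 1) - z i) x = 0 ∨
      (B (i+1)).indicator (fun _ => z (i + 1) - z i) x = z (i + 1) - z i := by
    intro i x
    by_cases hx : x ∈ B (i + 1)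
    · right; rw [Set.indicator_of_mem hx]
    · left; rw [Set.indicator_of_notMem hx]
  have hsbounds : ∀ x, z 0 ≤ s x ∧ s x ≤ z N := by
    intro x
    exact layer_sum_mem hzmono N _ (fun i => hind_mem i x)
  refine ⟨s, hssimple, ?_, G, hGmem, hGsmall, ?_⟩
  · intro x
    obtain ⟨hl, hu⟩ := hsbounds x
    rw [abs_le]
    constructor
    · have : -(y + δ) ≤ z 0 := by
        rw [ha] at hz0
        have := hz0.1
        rw [hδ'def] at *
        linarith [hz0.1]
      linarith
    · have := hzub N (le_refl N)
      rw [hδ'def] at *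
      linarith
  · intro x hxG
    -- on the complement of G the indicators agree with the level sets of f
    have hindeq : ∀ i, i + 1 ≤ N →
        (B (i+1)).indicator (fun _ => z (i + 1) - z i) x =
          (z (i + 1) - z i) * (if z (i + 1) < f x then 1 else 0) := by
      intro i hi
      have hxCB : x ∉ Cc (i+1) \ B (i+1) := by
        intro hmem
        exact hxG (Set.mem_biUnion (Finset.mem_range.mpr (Nat.lt_succ_of_le hi)) hmem)
      by_cases hx : x ∈ B (i + 1)
      · rw [Set.indicator_of_mem hx]
        have hfx : z (i + 1) < f x := by
          have := hBsub (i + 1) hx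
          simpa using this
        rw [if_pos hfx, mul_one]
      · rw [Set.indicator_of_notMem hx]
        have hfx : ¬(z (i + 1) < f x) := by
          intro hlt
          have : x ∈ f ⁻¹' Set.Ioi (z (i + 1)) := by simpa using hlt
          exact hxCB ⟨hCsub (i + 1) this, hx⟩
        rw [if_neg hfx, mul_zero]
    -- the clamped comparison value
    set t : ℝ := max (-y) (min (y + 2 * δ') (f x)) with ht
    have hteq : ∀ i, i + 1 ≤ N → ((z (i + 1) < f x) ↔ (z (i + 1) < t)) := by
      intro i hi
      constructor
      · intro h
        rw [ht]
        have h1 : z (i + 1) < y + 2 * δ' := hzub (i + 1) hi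
        rcases le_or_gt (f x) (y + 2 * δ') with hf1 | hf1
        · exact lt_max_of_lt_right (lt_min h1 h)
        · exact lt_max_of_lt_right (by rw [min_eq_left (le_of_lt hf1)]; exact h1)
      · intro h
        rw [ht] at h
        rcases max_cases (-y) (min (y + 2 * δ') (f x)) with ⟨heq, hle⟩ | ⟨heq, hle⟩
        · rw [heq] at h
          exact absurd h (not_lt.mpr (le_of_lt (hz1pos i)))
        · rw [heq] at h
          exact lt_of_lt_of_le h (min_le_right _ _)
    have hsx : s x = z 0 + ∑ i ∈ Finset.range N,
        (z (i + 1) - z i) * (if z (i + 1) < t then 1 else 0) := by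
      have hsum : ∀ i ∈ Finset.range N,
          (B (i + 1)).indicator (fun _ => z (i + 1) - z i) x =
          (z (i + 1) - z i) * (if z (i + 1) < t then 1 else 0) := by
        intro i hi
        have hi' : i + 1 ≤ N := Finset.mem_range.mp hi
        rw [hindeq i hi']
        by_cases hlt : z (i + 1) < f x
        · rw [if_pos hlt, if_pos ((hteq i hi').mp hlt)]
        · rw [if_neg hlt, if_neg (fun h => hlt ((hteq i hi').mpr h))]
      show z 0 + ∑ i ∈ Finset.range N,
          (B (i + 1)).indicator (fun _ => z (i + 1) - z i) x = _
      rw [Finset.sum_congr rfl hsum]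
    -- apply the layer-sum lemma
    have ht0 : z 0 < t := lt_of_lt_of_le hz0.2 (le_max_left _ _)
    have hlayer := layer_sum hzmono (fun i => hzgap i) ht0 N
    have htclose : |s x - t| ≤ 2 * δ' := by
      rw [hsx]
      by_cases hcase : z N < t
      · rw [(hlayer.1 hcase)]
        have htub : t ≤ y + 2 * δ' := by
          rw [ht]
          apply max_le
          · linarith
          · exact min_le_left _ _
        rw [abs_le]
        constructor
        · linarith
        · linarith [hzNy]
      · push_neg at hcase
        obtain ⟨hl, hu⟩ := hlayer.2 hcase
        rw [abs_le]
        constructor <;> linarith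
    have hclampclose : |t - max (-y) (min y (f x))| ≤ 2 * δ' := by
      rw [ht]
      calc |max (-y) (min (y + 2 * δ') (f x)) - max (-y) (min y (f x))| ≤
          max |(-y) - (-y)| |min (y + 2 * δ') (f x) - min y (f x)| :=
            abs_max_sub_max_le_max _ _ _ _
        _ ≤ 2 * δ' := by
            apply max_le
            · simp; linarith
            · calc |min (y + 2 * δ') (f x) - min y (f x)| ≤
                  max |(y + 2 * δ') - y| |f x - f x| := abs_min_sub_min_le_max _ _ _ _
                _ ≤ 2 * δ' := by
                    apply max_le
                    · rw [show y + 2 * δ' - y = 2 * δ' by ring, abs_of_nonneg (by linarith)]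
                    · simp; linarith
    calc |s x - max (-y) (min y (f x))| ≤ |s x - t| + |t - max (-y) (min y (f x))| := by
          have : s x - max (-y) (min y (f x)) = (s x - t) + (t - max (-y) (min y (f x))) := by
            ring
          rw [this]; exact abs_add_le _ _
      _ ≤ 2 * δ' + 2 * δ' := by linarith
      _ = δ := by rw [hδ'def]; ring

end IsCharge

end Clamp
section ClampL1

open Set Function Filter Topology

variable {X : Type*} {𝒜 : Set (Set X)} {μ : Set X → ℝ} {f g : X → ℝ}

namespace IsCharge

variable (hμ : IsCharge 𝒜 μ)
include hμ

lemma chargeIntegral_smul (hf : MemL1 𝒜 μ f) (c : ℝ) :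
    chargeIntegral 𝒜 μ (fun x => c * f x) = c * chargeIntegral 𝒜 μ f := by
  obtain ⟨fn', hfn⟩ := hf
  have t1 := (hμ.tendsto_chargeIntegral hfn).const_mul c
  have t3 := hμ.tendsto_chargeIntegral (hμ.determining_smul hfn c)
  have heq : (fun n => sIntegral μ (fun x => c * fn' n x)) =
      fun n => c * sIntegral μ (fn' n) :=
    funext fun n => hμ.sIntegral_smul (hfn.1 n) c
  rw [heq] at t3
  exact tendsto_nhds_unique t3 t1

lemma memL1_clamp {C : Set ℝ} (hC : C.Countable)
    (hcut : ∀ z ∉ C, f ⁻¹' Set.Ioi z ∈ pjField 𝒜 μ) {y : ℝ} (hy : 0 < y) :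
    MemL1 𝒜 μ (fun x => max (-y) (min y (f x))) := by
  have happ : ∀ k : ℕ, ∃ s, IsSimpleFn 𝒜 s ∧ (∀ x, |s x| ≤ y + 1) ∧
      ∃ G, G ∈ 𝒜 ∧ μ G < 1 / ((k:ℝ) + 1) ∧
        ∀ x ∉ G, |s x - max (-y) (min y (f x))| ≤ 1 / ((k:ℝ) + 1) := by
    intro k
    have hpos : (0:ℝ) < 1 / ((k:ℝ) + 1) := by positivity
    obtain ⟨s, hs1, hs2, G, hG1, hG2, hG3⟩ := hμ.clamp_approx hC hcut hy hpos hpos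
    refine ⟨s, hs1, fun x => le_trans (hs2 x) ?_, G, hG1, hG2, hG3⟩
    have : 1 / ((k:ℝ) + 1) ≤ 1 := by
      rw [div_le_one (by positivity)]
      linarith [Nat.cast_nonneg (α := ℝ) k]
    linarith
  choose s hssimple hsbound G hGmem hGsmall hsclose using happ
  set m : X → ℝ := fun x => max (-y) (min y (f x)) with hm
  have hμuniv : 0 ≤ μ Set.univ := hμ.nonneg _ hμ.univ_mem
  refine ⟨s, hssimple, ?_, ?_⟩
  · -- hazy convergence
    intro ε hε
    have hev : ∀ᶠ k : ℕ in atTop, 1 / ((k:ℝ) + 1) ≤ ε :=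
      tendsto_one_div_add_atTop_nhds_zero_nat.eventually (eventually_le_nhds hε)
    refine squeeze_zero' (Eventually.of_forall fun k => hμ.outer_nonneg _)
      (hev.mono fun k hk => ?_) tendsto_one_div_add_atTop_nhds_zero_nat
    have hsubset : {x | ε < |s k x - m x|} ⊆ G k := by
      intro x hx
      simp only [Set.mem_setOf_eq] at hx
      by_contra hxG
      have h' : |s k x - m x| ≤ 1 / ((k:ℝ) + 1) := hsclose k x hxG
      linarith
    calc outerCharge 𝒜 μ {x | ε < |s k x - m x|} ≤ μ (G k) :=
          hμ.outer_le (hGmem k) hsubset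
      _ ≤ 1 / ((k:ℝ) + 1) := le_of_lt (hGsmall k)
  · -- mean Cauchy
    rw [NormedAddCommGroup.tendsto_nhds_zero]
    intro ε hε
    set Cst := μ Set.univ + (2 * y + 2) with hCst
    have hCstpos : 0 < Cst + 1 := by rw [hCst]; linarith
    obtain ⟨K, hK⟩ := exists_nat_gt (2 * (Cst + 1) / ε)
    rw [eventually_atTop]
    refine ⟨(K, K), fun mn hmn => ?_⟩
    obtain ⟨hk, hl⟩ := hmn
    set k := mn.1; set l := mn.2
    have hpt : ∀ x, |s k x - s l x| ≤
        (fun _ : X => 1 / ((k:ℝ) + 1) + 1 / ((l:ℝ) + 1)) x +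
        ((G k).indicator (fun _ => 2 * y + 2) x + (G l).indicator (fun _ => 2 * y + 2) x) := by
      intro x
      have hiknn : ∀ j : ℕ, (0:ℝ) ≤ (G j).indicator (fun _ => 2 * y + 2) x :=
        fun j => Set.indicator_nonneg (fun _ _ => by linarith) x
      have hdnn : (0:ℝ) < 1 / ((k:ℝ) + 1) + 1 / ((l:ℝ) + 1) := by positivity
      by_cases hxk : x ∈ G k
      · have h1 : |s k x - s l x| ≤ 2 * y + 2 := by
          calc |s k x - s l x| ≤ |s k x| + |s l x| := abs_sub _ _
            _ ≤ (y + 1) + (y + 1) := add_le_add (hsbound k x) (hsbound l x)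
            _ = 2 * y + 2 := by ring
        rw [Set.indicator_of_mem hxk]
        simp only
        linarith [hiknn l]
      · by_cases hxl : x ∈ G l
        · have h1 : |s k x - s l x| ≤ 2 * y + 2 := by
            calc |s k x - s l x| ≤ |s k x| + |s l x| := abs_sub _ _
              _ ≤ (y + 1) + (y + 1) := add_le_add (hsbound k x) (hsbound l x)
              _ = 2 * y + 2 := by ring
          rw [Set.indicator_of_mem hxl]
          simp only
          linarith [hiknn k]
        · have h1 : |s k x - m x| ≤ 1 / ((k:ℝ) + 1) := hsclose k x hxk
          have h2 : |s l x - m x| ≤ 1 / ((l:ℝ) + 1) := hsclose l x hxl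
          rw [Set.indicator_of_notMem hxk, Set.indicator_of_notMem hxl]
          simp only
          have : |s k x - s l x| ≤ |s k x - m x| + |s l x - m x| := by
            have heq : s k x - s l x = (s k x - m x) - (s l x - m x) := by ring
            rw [heq]
            exact abs_sub _ _
          linarith
    have hint : sIntegral μ (fun x => |s k x - s l x|) ≤
        (1 / ((k:ℝ) + 1) + 1 / ((l:ℝ) + 1)) * μ Set.univ +
        ((2 * y + 2) * μ (G k) + (2 * y + 2) * μ (G l)) := by
      have hmon := hμ.sIntegral_mono
        (hμ.simple_op2 (hssimple k) (hssimple l) (fun a b => |a - b|))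
        (hμ.simple_op2 (hμ.simple_const _)
          (hμ.simple_op2 (hμ.simple_indicator (hGmem k) _)
            (hμ.simple_indicator (hGmem l) _) (fun a b => a + b)) (fun a b => a + b)) hpt
      rwa [hμ.sIntegral_add (hμ.simple_const _)
          (hμ.simple_op2 (hμ.simple_indicator (hGmem k) _)
            (hμ.simple_indicator (hGmem l) _) (fun a b => a + b)),
        hμ.sIntegral_add (hμ.simple_indicator (hGmem k) _) (hμ.simple_indicator (hGmem l) _),
        hμ.sIntegral_const, hμ.sIntegral_indicator (hGmem k),
        hμ.sIntegral_indicator (hGmem l)] at hmon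
    have hKpos : (0:ℝ) < K := lt_of_le_of_lt (by positivity) hK
    have harith : ∀ j : ℕ, K ≤ j → 1 / ((j:ℝ) + 1) ≤ 1 / ((K:ℝ) + 1) := by
      intro j hj
      apply one_div_le_one_div_of_le (by positivity)
      have : (K:ℝ) ≤ j := Nat.cast_le.mpr hj
      linarith
    have hbound : sIntegral μ (fun x => |s k x - s l x|) < ε := by
      have h2y : (0:ℝ) ≤ 2 * y + 2 := by linarith
      have hb1 : (2 * y + 2) * μ (G k) ≤ (2 * y + 2) * (1 / ((k:ℝ) + 1)) :=
        mul_le_mul_of_nonneg_left (le_of_lt (hGsmall k)) h2y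
      have hb2 : (2 * y + 2) * μ (G l) ≤ (2 * y + 2) * (1 / ((l:ℝ) + 1)) :=
        mul_le_mul_of_nonneg_left (le_of_lt (hGsmall l)) h2y
      have hμb : (1 / ((k:ℝ) + 1) + 1 / ((l:ℝ) + 1)) * μ Set.univ ≤
          (1 / ((k:ℝ) + 1) + 1 / ((l:ℝ) + 1)) * (Cst + 1) := by
        apply mul_le_mul_of_nonneg_left _ (by positivity)
        rw [hCst]; linarith
      have hsum : (1 / ((k:ℝ) + 1) + 1 / ((l:ℝ) + 1)) ≤ 2 / ((K:ℝ) + 1) := by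
        have := harith k hk
        have := harith l hl
        have h2 : (2:ℝ) / ((K:ℝ) + 1) = 1 / ((K:ℝ) + 1) + 1 / ((K:ℝ) + 1) := by ring
        rw [h2]
        linarith [harith k hk, harith l hl]
      have hfin : 2 / ((K:ℝ) + 1) * (Cst + 1) < ε := by
        rw [div_lt_iff₀ hε] at hK
        rw [div_mul_eq_mul_div, div_lt_iff₀ (by positivity)]
        nlinarith
      have hb3 : (2 * y + 2) * (1 / ((k:ℝ) + 1)) + (2 * y + 2) * (1 / ((l:ℝ) + 1)) ≤
          (1 / ((k:ℝ) + 1) + 1 / ((l:ℝ) + 1)) * (2 * y + 2) := by ring_nf; linarith [le_refl (0:ℝ)]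
      calc sIntegral μ (fun x => |s k x - s l x|) ≤
          (1 / ((k:ℝ) + 1) + 1 / ((l:ℝ) + 1)) * μ Set.univ +
          ((2 * y + 2) * μ (G k) + (2 * y + 2) * μ (G l)) := hint
        _ ≤ (1 / ((k:ℝ) + 1) + 1 / ((l:ℝ) + 1)) * μ Set.univ +
          (1 / ((k:ℝ) + 1) + 1 / ((l:ℝ) + 1)) * (2 * y + 2) := by linarith
        _ = (1 / ((k:ℝ) + 1) + 1 / ((l:ℝ) + 1)) * (μ Set.univ + (2 * y + 2)) := by ring
        _ ≤ (1 / ((k:ℝ) + 1) + 1 / ((l:ℝ) + 1)) * (Cst + 1) := by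
            apply mul_le_mul_of_nonneg_left _ (by positivity)
            rw [hCst]; linarith
        _ ≤ 2 / ((K:ℝ) + 1) * (Cst + 1) :=
            mul_le_mul_of_nonneg_right hsum (le_of_lt hCstpos)
        _ < ε := hfin
    have hnn : 0 ≤ sIntegral μ (fun x => |s k x - s l x|) :=
      hμ.sIntegral_nonneg (hμ.simple_op2 (hssimple k) (hssimple l) (fun a b => |a - b|))
        (fun x => abs_nonneg _)
    rw [Real.norm_eq_abs, abs_of_nonneg hnn]
    exact hbound

end IsCharge

end ClampL1
section MainDirections

open Set Function Filter Topology

variable {X : Type*} {𝒜 : Set (Set X)} {μ : Set X → ℝ} {f : X → ℝ}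

lemma clamp_abs_le {a b v : ℝ} (ha : 0 < a) (hb : 0 < b) :
    |max (-a) (min a v) - max (-b) (min b v)| ≤ |v| := by
  rcases le_or_gt 0 v with hv | hv
  · have f1 : 0 ≤ min a v := le_min (le_of_lt ha) hv
    have f2 : min a v ≤ v := min_le_right _ _
    have f3 : 0 ≤ min b v := le_min (le_of_lt hb) hv
    have f4 : min b v ≤ v := min_le_right _ _
    have e1 : max (-a) (min a v) = min a v := max_eq_right (by linarith)
    have e2 : max (-b) (min b v) = min b v := max_eq_right (by linarith)
    rw [e1, e2, abs_of_nonneg hv, abs_le]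
    constructor <;> linarith
  · have e1 : min a v = v := min_eq_right (by linarith)
    have e2 : min b v = v := min_eq_right (by linarith)
    have f1 : v ≤ max (-a) v := le_max_right _ _
    have f2 : max (-a) v ≤ 0 := max_le (by linarith) (le_of_lt hv)
    have f3 : v ≤ max (-b) v := le_max_right _ _
    have f4 : max (-b) v ≤ 0 := max_le (by linarith) (le_of_lt hv)
    rw [e1, e2, abs_of_neg hv, abs_le]
    constructor <;> linarith

lemma clamp_dist_le {a v : ℝ} (ha : 0 < a) (hav : a < |v|) :
    |v - max (-a) (min a v)| ≤ |v| := by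
  rcases le_or_gt 0 v with hv | hv
  · have hva : a < v := by rwa [abs_of_nonneg hv] at hav
    have e1 : min a v = a := min_eq_left (by linarith)
    have e2 : max (-a) a = a := max_eq_right (by linarith)
    rw [e1, e2, abs_of_nonneg hv, abs_of_nonneg (by linarith : (0:ℝ) ≤ v - a)]
    linarith
  · have hva : v < -a := by
      rw [abs_of_neg hv] at hav
      linarith
    have e1 : min a v = v := min_eq_right (by linarith)
    have e2 : max (-a) v = -a := max_eq_left (by linarith)
    rw [e1, e2, abs_of_neg hv, abs_of_neg (by linarith : v - -a < 0)]
    linarith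

lemma clamp_eq_self {a v : ℝ} (hav : |v| ≤ a) : max (-a) (min a v) = v := by
  have h := abs_le.mp hav
  rw [min_eq_right h.2, max_eq_right h.1]

namespace IsCharge

variable (hμ : IsCharge 𝒜 μ)
include hμ

lemma forward_b (hf : MemL1 𝒜 μ f) {ε : ℝ} (hε : 0 < ε) :
    ∃ y > (0:ℝ), MemL1 𝒜 μ (({x | y < |f x|}).indicator fun x => |f x|) ∧
      chargeIntegral 𝒜 μ (({x | y < |f x|}).indicator fun x => |f x|) < ε := by
  obtain ⟨fn, hfn⟩ := hf
  have habsdet : IsDetermining 𝒜 μ (fun n x => |fn n x|) (fun x => |f x|) :=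
    hμ.determining_comp1 hfn abs (fun a a' => abs_abs_sub_abs_le_abs_sub _ _)
  obtain ⟨C', hC'c, hC'cut⟩ := hμ.cut_pjField habsdet.1 habsdet.2.1
  have hdist := hμ.tendsto_integral_dist hfn
  obtain ⟨K, hK⟩ := (hdist.eventually (eventually_lt_nhds (show (0:ℝ) < ε/6 by linarith))).exists
  obtain ⟨M, hM0, hM⟩ := hμ.simple_bounded (hfn.1 K)
  obtain ⟨y, hy1, hy2, hy3⟩ := exists_Ioo_not_mem hC'c
    (show max (2*M) 1 < max (2*M) 1 + 1 by linarith)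
  have hypos : 0 < y :=
    lt_of_lt_of_le (lt_of_lt_of_le zero_lt_one (le_max_right (2*M) 1)) (le_of_lt hy1)
  have hDpj : {x | y < |f x|} ∈ pjField 𝒜 μ := hC'cut y hy3
  have hdet : IsDetermining 𝒜 μ (fun l x => |fn K x - fn l x|) (fun x => |fn K x - f x|) :=
    hμ.determining_comp2 (hμ.determining_const (hfn.1 K)) hfn (fun a b => |a - b|)
      hμ.lip_absdiff
  have hfg : MemL1 𝒜 μ (fun x => |fn K x - f x|) := ⟨_, hdet⟩
  have heqtail : (({x | y < |f x|}).indicator fun x => |f x|) =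
      fun x => max (|f x| - y) 0 +
        y * ({x | y < |f x|}).indicator (fun _ => (1:ℝ)) x := by
    funext x
    by_cases hx : x ∈ {x | y < |f x|}
    · rw [Set.indicator_of_mem hx, Set.indicator_of_mem hx]
      have hyx : y < |f x| := hx
      rw [max_eq_left (by linarith)]
      ring
    · rw [Set.indicator_of_notMem hx, Set.indicator_of_notMem hx]
      have hyx : |f x| ≤ y := not_lt.mp hx
      rw [max_eq_right (by linarith)]
      ring
  have h1 : MemL1 𝒜 μ (fun x => max (|f x| - y) 0) := by
    refine ⟨_, hμ.determining_comp1 hfn (fun a => max (|a| - y) 0)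
      (fun a a' => ?_)⟩
    calc |max (|a| - y) 0 - max (|a'| - y) 0| ≤ |(|a| - y) - (|a'| - y)| :=
          abs_max_sub_max_le_abs _ _ _
      _ = |(|a|) - (|a'|)| := by ring_nf
      _ ≤ |a - a'| := abs_abs_sub_abs_le_abs_sub _ _
  have h2 : MemL1 𝒜 μ (fun x => y * ({x | y < |f x|}).indicator (fun _ => (1:ℝ)) x) :=
    hμ.memL1_smul (hμ.memL1_indicator_pjField hDpj) y
  have htailmem : MemL1 𝒜 μ (({x | y < |f x|}).indicator fun x => |f x|) := by
    rw [heqtail]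
    exact hμ.memL1_add h1 h2
  have hptbound : ∀ x, (({x | y < |f x|}).indicator fun x => |f x|) x ≤
      2 * |fn K x - f x| := by
    intro x
    by_cases hx : x ∈ {x | y < |f x|}
    · rw [Set.indicator_of_mem hx]
      have hyx : y < |f x| := hx
      have hMy : 2 * M ≤ y := le_trans (le_max_left _ _) (le_of_lt hy1)
      have h5 : |f x| - M ≤ |fn K x - f x| := by
        calc |f x| - M ≤ |f x| - |fn K x| := by linarith [hM x]
          _ ≤ |f x - fn K x| := abs_sub_abs_le_abs_sub _ _
          _ = |fn K x - f x| := abs_sub_comm _ _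
      linarith
    · rw [Set.indicator_of_notMem hx]
      positivity
  have hint : chargeIntegral 𝒜 μ (({x | y < |f x|}).indicator fun x => |f x|) ≤
      2 * chargeIntegral 𝒜 μ (fun x => |fn K x - f x|) := by
    have hm := hμ.chargeIntegral_mono htailmem (hμ.memL1_smul hfg 2) hptbound
    rwa [hμ.chargeIntegral_smul hfg 2] at hm
  exact ⟨y, hypos, htailmem, by linarith⟩

end IsCharge

end MainDirections
section Backward

open Set Function Filter Topology

variable {X : Type*} {𝒜 : Set (Set X)} {μ : Set X → ℝ} {f : X → ℝ}

namespace IsCharge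

variable (hμ : IsCharge 𝒜 μ)
include hμ

lemma backward_dir {C : Set ℝ} (hCc : C.Countable)
    (hCcut : ∀ y ∉ C, f ⁻¹' Set.Ioi y ∈ pjField 𝒜 μ)
    (hb : ∀ ε > (0:ℝ), ∃ y > (0:ℝ),
      MemL1 𝒜 μ (({x | y < |f x|}).indicator fun x => |f x|) ∧
      chargeIntegral 𝒜 μ (({x | y < |f x|}).indicator fun x => |f x|) < ε) :
    MemL1 𝒜 μ f := by
  have hbj : ∀ j : ℕ, ∃ y, 0 < y ∧
      MemL1 𝒜 μ (({x | y < |f x|}).indicator fun x => |f x|) ∧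
      chargeIntegral 𝒜 μ (({x | y < |f x|}).indicator fun x => |f x|) < 1 / ((j:ℝ)+1) := by
    intro j
    obtain ⟨y, hy, h1, h2⟩ := hb (1 / ((j:ℝ)+1)) (by positivity)
    exact ⟨y, hy, h1, h2⟩
  choose yj hyj htailmem htailint using hbj
  have htailnn : ∀ j x, 0 ≤ ({x | yj j < |f x|}).indicator (fun x => |f x|) x :=
    fun j x => Set.indicator_nonneg (fun x _ => abs_nonneg _) x
  -- the clamps
  have hmmem : ∀ j : ℕ, MemL1 𝒜 μ (fun x => max (-(yj j)) (min (yj j) (f x))) :=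
    fun j => hμ.memL1_clamp hCc hCcut (hyj j)
  -- pointwise comparisons
  have hfm : ∀ (j : ℕ) (x : X), |f x - max (-(yj j)) (min (yj j) (f x))| ≤
      ({x | yj j < |f x|}).indicator (fun x => |f x|) x := by
    intro j x
    by_cases hx : x ∈ {x | yj j < |f x|}
    · rw [Set.indicator_of_mem hx]
      exact clamp_dist_le (hyj j) hx
    · rw [Set.indicator_of_notMem hx]
      have hyx : |f x| ≤ yj j := not_lt.mp hx
      rw [clamp_eq_self hyx, sub_self, abs_zero]
  have hmm : ∀ (j k : ℕ) (x : X),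
      |max (-(yj j)) (min (yj j) (f x)) - max (-(yj k)) (min (yj k) (f x))| ≤
      ({x | yj j < |f x|}).indicator (fun x => |f x|) x +
      ({x | yj k < |f x|}).indicator (fun x => |f x|) x := by
    intro j k x
    by_cases h1 : x ∈ {x | yj j < |f x|}
    · rw [Set.indicator_of_mem h1]
      have := clamp_abs_le (v := f x) (hyj j) (hyj k)
      linarith [htailnn k x, this]
    · by_cases h2 : x ∈ {x | yj k < |f x|}
      · rw [Set.indicator_of_mem h2]
        have := clamp_abs_le (v := f x) (hyj j) (hyj k)
        linarith [htailnn j x, this]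
      · rw [Set.indicator_of_notMem h1, Set.indicator_of_notMem h2]
        rw [clamp_eq_self (not_lt.mp h1), clamp_eq_self (not_lt.mp h2), sub_self, abs_zero]
        norm_num
  -- choose good simple approximants to the clamps
  have hsel : ∀ j : ℕ, ∃ s : X → ℝ, IsSimpleFn 𝒜 s ∧
      chargeIntegral 𝒜 μ (fun x => |s x - max (-(yj j)) (min (yj j) (f x))|) < 1/((j:ℝ)+1) ∧
      outerCharge 𝒜 μ {x | 1/((j:ℝ)+1) <
        |s x - max (-(yj j)) (min (yj j) (f x))|} < 1/((j:ℝ)+1) := by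
    intro j
    obtain ⟨σ, hσ⟩ := hmmem j
    have t1 := hμ.tendsto_integral_dist hσ
    have t2 := hσ.2.1 (1/((j:ℝ)+1)) (by positivity)
    obtain ⟨k, hk1, hk2⟩ := ((t1.eventually (eventually_lt_nhds
        (show (0:ℝ) < 1/((j:ℝ)+1) by positivity))).and
      (t2.eventually (eventually_lt_nhds (show (0:ℝ) < 1/((j:ℝ)+1) by positivity)))).exists
    exact ⟨σ k, hσ.1 k, hk1, hk2⟩
  choose s hssimple hsint hshazy using hsel
  refine ⟨s, hssimple, ?_, ?_⟩
  · -- hazy convergence to f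
    intro ε hε
    have hev : ∀ᶠ j : ℕ in atTop, 1/((j:ℝ)+1) ≤ ε/2 :=
      tendsto_one_div_add_atTop_nhds_zero_nat.eventually (eventually_le_nhds (half_pos hε))
    refine squeeze_zero' (f := fun j : ℕ => outerCharge 𝒜 μ {x | ε < |s j x - f x|})
      (g := fun j : ℕ => (1 + 4/ε) * (1/((j:ℝ)+1)))
      (Eventually.of_forall fun j => hμ.outer_nonneg _)
      (hev.mono fun j hj => ?_) ?_
    · have hsub : {x | ε < |s j x - f x|} ⊆
          {x | ε/2 < |s j x - max (-(yj j)) (min (yj j) (f x))|} ∪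
          {x | ε/2 < ({x | yj j < |f x|}).indicator (fun x => |f x|) x} := by
        intro x hx
        simp only [Set.mem_setOf_eq] at hx
        by_contra h
        simp only [Set.mem_union, Set.mem_setOf_eq, not_or, not_lt] at h
        have htri : |s j x - f x| ≤ |s j x - max (-(yj j)) (min (yj j) (f x))| +
            |f x - max (-(yj j)) (min (yj j) (f x))| := by
          have heq : s j x - f x = (s j x - max (-(yj j)) (min (yj j) (f x))) -
              (f x - max (-(yj j)) (min (yj j) (f x))) := by ring
          rw [heq]
          exact abs_sub _ _
        have := hfm j x
        linarith [h.1, h.2]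
      have hb1 : outerCharge 𝒜 μ
          {x | ε/2 < |s j x - max (-(yj j)) (min (yj j) (f x))|} ≤ 1/((j:ℝ)+1) := by
        refine le_trans (hμ.outer_mono ?_) (le_of_lt (hshazy j))
        intro x hx
        simp only [Set.mem_setOf_eq] at hx ⊢
        linarith
      have hb2 : outerCharge 𝒜 μ
          {x | ε/2 < ({x | yj j < |f x|}).indicator (fun x => |f x|) x} ≤
          (4/ε) * (1/((j:ℝ)+1)) := by
        have hcheb := hμ.outer_cheb (htailmem j) (htailnn j)
          (show (0:ℝ) < ε/4 by linarith) (show ε/4 < ε/2 by linarith)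
        refine le_trans hcheb ?_
        have h2 := le_of_lt (htailint j)
        rw [div_le_iff₀ (show (0:ℝ) < ε/4 by linarith)]
        have heq4 : 4/ε * (1/((j:ℝ)+1)) * (ε/4) = 1/((j:ℝ)+1) := by
          field_simp
        rw [heq4]
        exact h2
      calc outerCharge 𝒜 μ {x | ε < |s j x - f x|} ≤ _ := hμ.outer_mono hsub
        _ ≤ _ := hμ.outer_union_le _ _
        _ ≤ 1/((j:ℝ)+1) + (4/ε) * (1/((j:ℝ)+1)) := add_le_add hb1 hb2
        _ = (1 + 4/ε) * (1/((j:ℝ)+1)) := by ring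
    · have := tendsto_one_div_add_atTop_nhds_zero_nat.const_mul (1 + 4/ε)
      simpa using this
  · -- mean Cauchy
    rw [NormedAddCommGroup.tendsto_nhds_zero]
    intro ε hε
    obtain ⟨K, hK⟩ := exists_nat_gt (4 / ε)
    rw [eventually_atTop]
    refine ⟨(K, K), fun mn hmn => ?_⟩
    obtain ⟨hk, hl⟩ := hmn
    set j := mn.1; set k := mn.2
    -- L1 components
    have hAj : MemL1 𝒜 μ (fun x => |s j x - max (-(yj j)) (min (yj j) (f x))|) :=
      hμ.memL1_comp2 (hμ.memL1_simple (hssimple j)) (hmmem j) (fun a b => |a - b|)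
        hμ.lip_absdiff
    have hAk : MemL1 𝒜 μ (fun x => |s k x - max (-(yj k)) (min (yj k) (f x))|) :=
      hμ.memL1_comp2 (hμ.memL1_simple (hssimple k)) (hmmem k) (fun a b => |a - b|)
        hμ.lip_absdiff
    have hpt : ∀ x, |s j x - s k x| ≤
        (fun x => |s j x - max (-(yj j)) (min (yj j) (f x))|) x +
        ((fun x => ({x | yj j < |f x|}).indicator (fun x => |f x|) x +
          ({x | yj k < |f x|}).indicator (fun x => |f x|) x) x +
        (fun x => |s k x - max (-(yj k)) (min (yj k) (f x))|) x) := by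
      intro x
      show |s j x - s k x| ≤ |s j x - max (-(yj j)) (min (yj j) (f x))| +
        (({x | yj j < |f x|}).indicator (fun x => |f x|) x +
          ({x | yj k < |f x|}).indicator (fun x => |f x|) x +
          |s k x - max (-(yj k)) (min (yj k) (f x))|)
      set A := max (-(yj j)) (min (yj j) (f x)) with hA
      set B := max (-(yj k)) (min (yj k) (f x)) with hB
      have t1 : |s j x - s k x| ≤ |s j x - A| + |A - s k x| := by
        have heq : s j x - s k x = (s j x - A) + (A - s k x) := by ring
        rw [heq]; exact abs_add_le _ _
      have t2 : |A - s k x| ≤ |A - B| + |B - s k x| := by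
        have heq : A - s k x = (A - B) + (B - s k x) := by ring
        rw [heq]; exact abs_add_le _ _
      have h2 := hmm j k x
      have h3 : |B - s k x| = |s k x - B| := abs_sub_comm _ _
      linarith
    -- memberships for the sum
    have hsum2 : MemL1 𝒜 μ (fun x => ({x | yj j < |f x|}).indicator (fun x => |f x|) x +
        ({x | yj k < |f x|}).indicator (fun x => |f x|) x) :=
      hμ.memL1_add (htailmem j) (htailmem k)
    have hsum3 : MemL1 𝒜 μ (fun x =>
        (fun x => ({x | yj j < |f x|}).indicator (fun x => |f x|) x +
          ({x | yj k < |f x|}).indicator (fun x => |f x|) x) x +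
        (fun x => |s k x - max (-(yj k)) (min (yj k) (f x))|) x) :=
      hμ.memL1_add hsum2 hAk
    have hmono := hμ.chargeIntegral_mono
      (hμ.memL1_comp2 (hμ.memL1_simple (hssimple j)) (hμ.memL1_simple (hssimple k))
        (fun a b => |a - b|) hμ.lip_absdiff)
      (hμ.memL1_add hAj hsum3) hpt
    rw [hμ.chargeIntegral_add hAj hsum3, hμ.chargeIntegral_add hsum2 hAk,
      hμ.chargeIntegral_add (htailmem j) (htailmem k)] at hmono
    have hCIsimple : chargeIntegral 𝒜 μ (fun x => |s j x - s k x|) =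
        sIntegral μ (fun x => |s j x - s k x|) :=
      hμ.chargeIntegral_simple (hμ.simple_op2 (hssimple j) (hssimple k) (fun a b => |a - b|))
    rw [hCIsimple] at hmono
    -- arithmetic
    have harith : ∀ i : ℕ, K ≤ i → 1/((i:ℝ)+1) ≤ 1/((K:ℝ)+1) := by
      intro i hi
      apply one_div_le_one_div_of_le (by positivity)
      have : (K:ℝ) ≤ i := Nat.cast_le.mpr hi
      linarith
    have hKbound : (4:ℝ)/((K:ℝ)+1) < ε := by
      rw [div_lt_iff₀ (by positivity)]
      rw [div_lt_iff₀ hε] at hK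
      nlinarith
    have hnn : 0 ≤ sIntegral μ (fun x => |s j x - s k x|) :=
      hμ.sIntegral_nonneg (hμ.simple_op2 (hssimple j) (hssimple k) (fun a b => |a - b|))
        (fun x => abs_nonneg _)
    rw [Real.norm_eq_abs, abs_of_nonneg hnn]
    have e1 := hsint j
    have e2 := hsint k
    have e3 := htailint j
    have e4 := htailint k
    have g1 := harith j hk
    have g2 := harith k hl
    calc sIntegral μ (fun x => |s j x - s k x|) ≤ _ := hmono
      _ < 1/((j:ℝ)+1) + (1/((j:ℝ)+1) + 1/((k:ℝ)+1) + 1/((k:ℝ)+1)) := by linarith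
      _ ≤ 4/((K:ℝ)+1) := by
          have h4 : (4:ℝ)/((K:ℝ)+1) =
              1/((K:ℝ)+1) + (1/((K:ℝ)+1) + 1/((K:ℝ)+1) + 1/((K:ℝ)+1)) := by ring
          rw [h4]
          linarith
      _ < ε := hKbound

end IsCharge

end Backward
/-- `f ∈ L₁(X,𝒜,μ)` iff (a) there is a countable `C ⊂ ℝ` with
`f⁻¹(y,∞) ∈ 𝒜̄` for all `y ∉ C`, and (b) for all `ε > 0` there is `y ∈ (0,∞)` with
`|f|·1_{|f|⁻¹(y,∞)} ∈ L₁` and `∫ |f|·1_{|f|⁻¹(y,∞)} dμ < ε`. -/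
theorem integrable_characterisation {X : Type*} (𝒜 : Set (Set X)) (μ : Set X → ℝ)
    (hμ : IsCharge 𝒜 μ) (f : X → ℝ) :
    MemL1 𝒜 μ f ↔
      ((∃ C : Set ℝ, C.Countable ∧ ∀ y : ℝ, y ∉ C → f ⁻¹' Set.Ioi y ∈ pjField 𝒜 μ) ∧
        ∀ ε > (0 : ℝ), ∃ y > (0 : ℝ),
          MemL1 𝒜 μ (({x | y < |f x|}).indicator fun x => |f x|) ∧
          chargeIntegral 𝒜 μ (({x | y < |f x|}).indicator fun x => |f x|) < ε) := by
  constructor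
  · intro hf
    constructor
    · obtain ⟨fn, hs, hh, hd⟩ := hf
      exact hμ.cut_pjField hs hh
    · intro ε hε
      exact hμ.forward_b hf hε
  · rintro ⟨⟨C, hCc, hCcut⟩, hb⟩
    exact hμ.backward_dir hCc hCcut hb
end

section
/- Suppose (X,𝒜,μ) is a measure space with μ(X) < ∞, regarded as a bounded charge space. Then (X,𝒜,μ) is Peano-Jordan complete (equal to its Peano-Jordan completion) if and only if it is a complete measure space (every subset of a μ-null set of 𝒜 belongs to 𝒜). -/
open Filter Set Topology

open MeasureTheory in
/-- A finite measure space, regarded as a bounded charge space, is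
Peano-Jordan complete iff it is a complete measure space. -/
theorem pj_complete_iff_complete_measure {X : Type*} [MeasurableSpace X]
    (ν : Measure X) [IsFiniteMeasure ν] :
    pjField {A : Set X | MeasurableSet A} (fun A => (ν A).toReal)
        = {A : Set X | MeasurableSet A} ↔
      (∀ A N : Set X, MeasurableSet N → ν N = 0 → A ⊆ N → MeasurableSet A) := by
  constructor
  · intro hpj A N hN hν hAN
    have hA : A ∈ pjField {A : Set X | MeasurableSet A} (fun A => (ν A).toReal) := by
      intro ε hε
      refine ⟨∅, MeasurableSet.empty, N, hN, empty_subset _, hAN, ?_⟩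
      simp [diff_empty, hν, hε]
    rw [hpj] at hA
    exact hA
  · intro hcomp
    apply Set.Subset.antisymm
    · intro A hA
      choose B hBm C hCm hBA hAC hsmall using
        fun n : ℕ => hA (1 / (n + 1)) (by positivity)
      set B' : Set X := ⋃ n, B n with hB'
      set C' : Set X := ⋂ n, C n with hC'
      have hB'm : MeasurableSet B' := MeasurableSet.iUnion hBm
      have hC'm : MeasurableSet C' := MeasurableSet.iInter hCm
      have hnull : ν (C' \ B') = 0 := by
        by_contra h
        have hpos : 0 < (ν (C' \ B')).toReal :=
          ENNReal.toReal_pos h (measure_ne_top ν _)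
        obtain ⟨n, hn⟩ := exists_nat_one_div_lt hpos
        have hle : ν (C' \ B') ≤ ν (C n \ B n) :=
          measure_mono (diff_subset_diff (iInter_subset _ n) (subset_iUnion _ n))
        have : (ν (C' \ B')).toReal ≤ (ν (C n \ B n)).toReal :=
          ENNReal.toReal_mono (measure_ne_top ν _) hle
        linarith [hsmall n]
      have hAB : A \ B' ⊆ C' \ B' :=
        diff_subset_diff_left (subset_iInter fun n => hAC n)
      have : MeasurableSet (A \ B') := hcomp _ _ (hC'm.diff hB'm) hnull hAB
      have hAeq : A = B' ∪ (A \ B') := by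
        rw [union_diff_cancel (iUnion_subset fun n => hBA n)]
      rw [hAeq]
      exact hB'm.union this
    · intro A hA ε hε
      exact ⟨A, hA, A, hA, subset_rfl, subset_rfl, by simp [hε]⟩
end

section
/- Let 𝒜 be a countably complete Boolean algebra (every countable subset has a least upper bound) and let μ : 𝒜 → [0,∞) be a bounded countably additive function (μ(0) = 0 and μ(⋁_{k=1}^∞ p_k) = Σ_{k=1}^∞ μ(p_k) for any pairwise disjoint sequence {p_k}). Suppose φ : 𝒜 → 𝒫(Y) is a representation of 𝒜, i.e., an injective Boolean algebra homomorphism into the powerset of a set Y. Define a charge on the field of sets φ(𝒜) by μ(φ(A)) := μ(A) for A ∈ 𝒜. Then (Y, \overline{φ(𝒜)}, μ̄) is a complete measure space, where (Y, \overline{φ(𝒜)}, μ̄) is the Peano-Jordan completion of (Y, φ(𝒜), μ); in particular \overline{φ(𝒜)} is a σ-field and μ̄ is countably additive on it. -/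
open Filter Set Topology

/-- If `𝒜` is a countably complete Boolean algebra, `μ` a bounded
countably additive function on it, and `φ : 𝒜 → 𝒫(Y)` a representation (injective
Boolean homomorphism), then the Peano-Jordan completion of `(Y, φ(𝒜), ν)` (where
`ν(φ a) := μ a`) is a complete measure space: the completed field is a σ-field,
the completed charge is countably additive on it, and every subset of a null
member of the field belongs to the field. -/
theorem sigma_embedding {α Y : Type*} [BooleanAlgebra α]
    (hcc : ∀ s : Set α, s.Countable → ∃ b : α, IsLUB s b)
    (μ : α → ℝ) (hμbot : μ ⊥ = 0) (hμnonneg : ∀ a, 0 ≤ μ a)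
    (hμca : ∀ (p : ℕ → α) (b : α), (Pairwise fun i j => Disjoint (p i) (p j)) →
      IsLUB (Set.range p) b → HasSum (fun k => μ (p k)) (μ b))
    (φ : α → Set Y) (hφinj : Function.Injective φ)
    (hφbot : φ ⊥ = ∅) (hφtop : φ ⊤ = Set.univ)
    (hφsup : ∀ a b : α, φ (a ⊔ b) = φ a ∪ φ b)
    (hφinf : ∀ a b : α, φ (a ⊓ b) = φ a ∩ φ b)
    (hφcompl : ∀ a : α, φ aᶜ = (φ a)ᶜ)
    (ν : Set Y → ℝ) (hν : ∀ a : α, ν (φ a) = μ a) :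
    IsSetField (pjField (Set.range φ) ν) ∧
    (∀ A : ℕ → Set Y, (∀ n, A n ∈ pjField (Set.range φ) ν) →
      (⋃ n, A n) ∈ pjField (Set.range φ) ν) ∧
    (∀ A : ℕ → Set Y, (∀ n, A n ∈ pjField (Set.range φ) ν) →
      (Pairwise fun i j => Disjoint (A i) (A j)) →
      HasSum (fun n => pjCharge (Set.range φ) ν (A n))
        (pjCharge (Set.range φ) ν (⋃ n, A n))) ∧
    (∀ N ∈ pjField (Set.range φ) ν, pjCharge (Set.range φ) ν N = 0 →
      ∀ A ⊆ N, A ∈ pjField (Set.range φ) ν) := by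
  classical
  -- ### order embedding facts
  have hmono : ∀ {a b : α}, a ≤ b → φ a ⊆ φ b := by
    intro a b hab
    have h : φ (a ⊔ b) = φ b := by rw [sup_eq_right.mpr hab]
    rw [hφsup] at h
    rw [← h]; exact Set.subset_union_left
  have horder : ∀ {a b : α}, φ a ⊆ φ b → a ≤ b := by
    intro a b h
    have h2 : φ (a ⊔ b) = φ b := by rw [hφsup, Set.union_eq_right.mpr h]
    exact sup_eq_right.mp (hφinj h2)
  have hdisj : ∀ {a b : α}, Disjoint (φ a) (φ b) → Disjoint a b := by
    intro a b h
    have h2 : φ (a ⊓ b) = φ ⊥ := by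
      rw [hφinf, hφbot, Set.disjoint_iff_inter_eq_empty.mp h]
    exact disjoint_iff.mpr (hφinj h2)
  have hφsdiff : ∀ a b : α, φ (a \ b) = φ a \ φ b := by
    intro a b
    rw [show a \ b = a ⊓ bᶜ from _root_.sdiff_eq, hφinf, hφcompl, Set.diff_eq]
  -- ### finite additivity of μ
  have hadd : ∀ a b : α, Disjoint a b → μ (a ⊔ b) = μ a + μ b := by
    intro a b hab
    set p : ℕ → α := fun k => if k = 0 then a else if k = 1 then b else ⊥ with hp
    have hp0 : p 0 = a := by simp [hp]
    have hp1 : p 1 = b := by simp [hp]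
    have hp2 : ∀ k, 2 ≤ k → p k = ⊥ := by
      intro k hk; simp only [hp]; rw [if_neg (by omega), if_neg (by omega)]
    have hpd : Pairwise fun i j => Disjoint (p i) (p j) := by
      intro i j hij
      rcases Nat.lt_or_ge j 2 with hj | hj
      · rcases Nat.lt_or_ge i 2 with hi | hi
        · interval_cases i <;> interval_cases j <;>
            simp_all [hp0, hp1] <;> first | exact hab | exact hab.symm
        · rw [hp2 i hi]; exact disjoint_bot_left
      · rw [hp2 j hj]; exact disjoint_bot_right
    have hlub : IsLUB (Set.range p) (a ⊔ b) := by
      constructor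
      · rintro x ⟨k, rfl⟩
        rcases Nat.lt_or_ge k 2 with hk | hk
        · interval_cases k
          · rw [hp0]; exact le_sup_left
          · rw [hp1]; exact le_sup_right
        · rw [hp2 k hk]; exact bot_le
      · intro x hx
        have h0 := hx ⟨0, rfl⟩
        have h1 := hx ⟨1, rfl⟩
        rw [hp0] at h0; rw [hp1] at h1
        exact sup_le h0 h1
    have hfin : HasSum (fun k => μ (p k)) (μ a + μ b) := by
      have h0 : ∀ k ∉ ({0, 1} : Finset ℕ), μ (p k) = 0 := by
        intro k hk
        simp only [Finset.mem_insert, Finset.mem_singleton] at hk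
        push_neg at hk
        rw [hp2 k (by omega), hμbot]
      have h1 := hasSum_sum_of_ne_finset_zero (L := SummationFilter.unconditional ℕ) h0
      rw [Finset.sum_pair (by norm_num : (0:ℕ) ≠ 1), hp0, hp1] at h1
      exact h1
    exact (hμca p (a ⊔ b) hpd hlub).unique hfin
  have hμmono : ∀ {a b : α}, a ≤ b → μ a ≤ μ b := by
    intro a b hab
    have h := hadd a (b \ a) disjoint_sdiff_self_right
    rw [sup_sdiff_cancel_right hab] at h
    have := hμnonneg (b \ a)
    linarith
  have hμsub : ∀ a b : α, μ (a ⊔ b) ≤ μ a + μ b := by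
    intro a b
    have h1 : a ⊔ b = a ⊔ b \ a := (sup_sdiff_self_right a b).symm
    rw [h1, hadd a (b \ a) disjoint_sdiff_self_right]
    have := hμmono (sdiff_le : b \ a ≤ b)
    linarith
  have hμsdiff : ∀ {a b : α}, a ≤ b → μ (b \ a) = μ b - μ a := by
    intro a b hab
    have h := hadd a (b \ a) disjoint_sdiff_self_right
    rw [sup_sdiff_cancel_right hab] at h
    linarith
  -- ### continuity from below
  have hcont : ∀ (d : ℕ → α) (c : α), Monotone d → IsLUB (Set.range d) c →
      Tendsto (fun n => μ (d n)) atTop (𝓝 (μ c)) := by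
    intro d c hd hc
    set p : ℕ → α := fun k => match k with | 0 => d 0 | (k+1) => d (k+1) \ d k with hp
    have hple : ∀ k, p k ≤ d k := by
      intro k; cases k with
      | zero => exact le_rfl
      | succ k => exact sdiff_le
    have hpd : Pairwise fun i j => Disjoint (p i) (p j) := by
      have key : ∀ i j, i < j → Disjoint (p i) (p j) := by
        intro i j hij
        obtain ⟨j, rfl⟩ : ∃ j', j = j' + 1 := ⟨j - 1, by omega⟩
        have h1 : p i ≤ d j := (hple i).trans (hd (by omega))
        have h2 : Disjoint (d (j+1) \ d j) (d j) := disjoint_sdiff_self_left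
        exact (h2.mono_right h1).symm
      intro i j hij
      rcases lt_or_gt_of_ne hij with h | h
      · exact key i j h
      · exact (key j i h).symm
    have hpsum : ∀ N, ∑ k ∈ Finset.range (N+1), μ (p k) = μ (d N) := by
      intro N
      induction N with
      | zero => simp; rfl
      | succ N ih =>
        rw [Finset.sum_range_succ, ih]
        have h1 : Disjoint (d N) (d (N+1) \ d N) := disjoint_sdiff_self_right
        have h2 : d N ⊔ d (N+1) \ d N = d (N+1) := sup_sdiff_cancel_right (hd (Nat.le_succ N))
        have h3 : p (N+1) = d (N+1) \ d N := rfl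
        rw [h3, ← hadd _ _ h1, h2]
    have hub : ∀ x, x ∈ upperBounds (Set.range p) → ∀ N, d N ≤ x := by
      intro x hx N
      induction N with
      | zero => exact hx ⟨0, rfl⟩
      | succ N ih =>
        have h2 : d (N+1) = d N ⊔ d (N+1) \ d N := (sup_sdiff_cancel_right (hd (Nat.le_succ N))).symm
        rw [h2]
        exact sup_le ih (hx ⟨N+1, rfl⟩)
    have hplub : IsLUB (Set.range p) c := by
      constructor
      · rintro x ⟨k, rfl⟩
        exact (hple k).trans (hc.1 ⟨k, rfl⟩)
      · intro x hx
        exact hc.2 (by rintro y ⟨N, rfl⟩; exact hub x hx N)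
    have h1 := (hμca p c hpd hplub).tendsto_sum_nat
    have h2 := h1.comp (tendsto_add_atTop_nat 1)
    have h3 : ((fun n => ∑ i ∈ Finset.range n, μ (p i)) ∘ fun n => n + 1) =
        fun N => μ (d N) := by
      funext N
      exact hpsum N
    rwa [h3] at h2
  -- ### geometric sums
  have hgeo2 : ∀ ε : ℝ, 0 ≤ ε → ∀ N : ℕ, ∑ k ∈ Finset.range N, ε / 2^(k+2) ≤ ε / 2 := by
    intro ε hε N
    have h1 : ∀ k ∈ Finset.range N, ε / 2^(k+2) = (ε/4) * (1/2:ℝ)^k := by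
      intro k _
      rw [div_pow, one_pow, pow_add]
      ring
    rw [Finset.sum_congr rfl h1, ← Finset.mul_sum]
    nlinarith [sum_geometric_two_le N, Finset.sum_nonneg
      (fun k (_ : k ∈ Finset.range N) => pow_nonneg (by norm_num : (0:ℝ) ≤ 1/2) k)]
  have hgeo1 : ∀ ε : ℝ, 0 ≤ ε → ∀ N : ℕ, ∑ k ∈ Finset.range N, ε / 2^(k+1) ≤ ε := by
    intro ε hε N
    have h1 : ∀ k ∈ Finset.range N, ε / 2^(k+1) = (ε/2) * (1/2:ℝ)^k := by
      intro k _
      rw [div_pow, one_pow, pow_add]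
      ring
    rw [Finset.sum_congr rfl h1, ← Finset.mul_sum]
    nlinarith [sum_geometric_two_le N, Finset.sum_nonneg
      (fun k (_ : k ∈ Finset.range N) => pow_nonneg (by norm_num : (0:ℝ) ≤ 1/2) k)]
  -- ### finite sup (sub)additivity
  have hsupadd : ∀ (b : ℕ → α), (Pairwise fun i j => Disjoint (b i) (b j)) →
      ∀ N, μ ((Finset.range N).sup b) = ∑ k ∈ Finset.range N, μ (b k) := by
    intro b hb N
    induction N with
    | zero => simpa using hμbot
    | succ N ih =>
      rw [Finset.range_add_one, Finset.sup_insert, Finset.sum_insert Finset.notMem_range_self]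
      have hdj : Disjoint (b N) ((Finset.range N).sup b) := by
        rw [Finset.disjoint_sup_right]
        intro i hi
        exact hb (by simp at hi; omega : N ≠ i)
      rw [hadd _ _ hdj, ih]
  have hsupsub : ∀ (b : ℕ → α) (N : ℕ),
      μ ((Finset.range N).sup b) ≤ ∑ k ∈ Finset.range N, μ (b k) := by
    intro b N
    induction N with
    | zero => simpa using le_of_eq hμbot
    | succ N ih =>
      rw [Finset.range_add_one, Finset.sup_insert, Finset.sum_insert Finset.notMem_range_self]
      exact (hμsub _ _).trans (by linarith)
  have hφfin : ∀ (b : ℕ → α) (S : Set Y) (N : ℕ), (∀ k, k < N → φ (b k) ⊆ S) →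
      φ ((Finset.range N).sup b) ⊆ S := by
    intro b S N
    induction N with
    | zero =>
      intro _
      rw [Finset.range_zero, Finset.sup_empty, hφbot]
      exact Set.empty_subset S
    | succ N ih =>
      intro hN
      rw [Finset.range_add_one, Finset.sup_insert, hφsup]
      exact Set.union_subset (hN N (Nat.lt_succ_self N)) (ih fun k hk => hN k (by omega))
  have hsdsup : ∀ (cn bn : ℕ → α) (N : ℕ),
      (Finset.range N).sup cn \ (Finset.range N).sup bn ≤
        (Finset.range N).sup (fun k => cn k \ bn k) := by
    intro cn bn N
    induction N with
    | zero => simp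
    | succ N ih =>
      rw [Finset.range_add_one, Finset.sup_insert, Finset.sup_insert, Finset.sup_insert, sup_sdiff]
      refine sup_le_sup ?_ ?_
      · exact sdiff_le_sdiff le_rfl le_sup_left
      · exact (sdiff_le_sdiff le_rfl le_sup_right).trans ih
  -- ### pjField data extraction / packaging
  have hdata : ∀ A ∈ pjField (Set.range φ) ν, ∀ ε > (0:ℝ),
      ∃ b c : α, φ b ⊆ A ∧ A ⊆ φ c ∧ μ (c \ b) < ε := by
    intro A hA ε hε
    obtain ⟨B, ⟨b, rfl⟩, C, ⟨c, rfl⟩, h1, h2, h3⟩ := hA ε hε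
    rw [← hφsdiff, hν] at h3
    exact ⟨b, c, h1, h2, h3⟩
  have hmem : ∀ (A : Set Y), (∀ ε > (0:ℝ), ∃ b c : α, φ b ⊆ A ∧ A ⊆ φ c ∧ μ (c \ b) < ε) →
      A ∈ pjField (Set.range φ) ν := by
    intro A h ε hε
    obtain ⟨b, c, h1, h2, h3⟩ := h ε hε
    exact ⟨φ b, ⟨b, rfl⟩, φ c, ⟨c, rfl⟩, h1, h2, by rw [← hφsdiff, hν]; exact h3⟩
  -- ### pjCharge basic facts
  have hbddA : ∀ A : Set Y, BddAbove (ν '' {B | B ∈ Set.range φ ∧ B ⊆ A}) := by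
    intro A
    refine ⟨μ ⊤, ?_⟩
    rintro x ⟨B, ⟨⟨b, rfl⟩, hBA⟩, rfl⟩
    rw [hν]
    exact hμmono le_top
  have hneA : ∀ A : Set Y, (ν '' {B | B ∈ Set.range φ ∧ B ⊆ A}).Nonempty := by
    intro A
    exact ⟨ν ∅, ⟨∅, ⟨⟨⊥, hφbot⟩, Set.empty_subset A⟩, rfl⟩⟩
  have hle_pj : ∀ (A : Set Y) (b : α), φ b ⊆ A → μ b ≤ pjCharge (Set.range φ) ν A := by
    intro A b h
    have h2 := le_csSup (hbddA A) (⟨φ b, ⟨⟨b, rfl⟩, h⟩, rfl⟩ :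
      ν (φ b) ∈ ν '' {B | B ∈ Set.range φ ∧ B ⊆ A})
    rw [hν] at h2
    exact h2
  have hpj_le : ∀ (A : Set Y) (x : ℝ), (∀ b : α, φ b ⊆ A → μ b ≤ x) →
      pjCharge (Set.range φ) ν A ≤ x := by
    intro A x h
    refine csSup_le (hneA A) ?_
    rintro y ⟨B, ⟨⟨b, rfl⟩, hBA⟩, rfl⟩
    rw [hν]
    exact h b hBA
  have hpj_nonneg : ∀ A : Set Y, 0 ≤ pjCharge (Set.range φ) ν A := by
    intro A
    have h := hle_pj A ⊥ (by rw [hφbot]; exact Set.empty_subset A)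
    rwa [hμbot] at h
  have hpj_approx : ∀ (A : Set Y) (ε : ℝ), 0 < ε →
      ∃ b : α, φ b ⊆ A ∧ pjCharge (Set.range φ) ν A - ε < μ b := by
    intro A ε hε
    obtain ⟨x, hx, hlt⟩ := exists_lt_of_lt_csSup (hneA A)
      (sub_lt_self (pjCharge (Set.range φ) ν A) hε)
    obtain ⟨B, ⟨⟨b, rfl⟩, hBA⟩, rfl⟩ := hx
    rw [hν] at hlt
    exact ⟨b, hBA, hlt⟩
  -- ### the core construction for countable unions
  have hcore : ∀ (A : ℕ → Set Y), (∀ n, A n ∈ pjField (Set.range φ) ν) →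
      ∀ ε > (0:ℝ), ∃ (bn cn : ℕ → α) (c : α) (N₀ : ℕ),
        (∀ n, φ (bn n) ⊆ A n) ∧ (∀ n, A n ⊆ φ (cn n)) ∧
        (∀ n, μ (cn n \ bn n) < ε / 2^(n+2)) ∧
        (∀ N, (Finset.range N).sup cn ≤ c) ∧ (⋃ n, A n) ⊆ φ c ∧
        (∀ N, N₀ ≤ N → μ c - μ ((Finset.range N).sup cn) < ε / 2) := by
    intro A hA ε hε
    choose bn cn h1 h2 h3 using fun n => hdata (A n) (hA n) (ε / 2^(n+2)) (by positivity)
    obtain ⟨c, hc⟩ := hcc (Set.range cn) (Set.countable_range cn)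
    set d : ℕ → α := fun N => (Finset.range N).sup cn with hd
    have hdc : ∀ N, d N ≤ c := by
      intro N
      exact Finset.sup_le fun k _ => hc.1 ⟨k, rfl⟩
    have hdmono : Monotone d := fun i j hij =>
      Finset.sup_mono (Finset.range_subset_range.mpr hij)
    have hdlub : IsLUB (Set.range d) c := by
      constructor
      · rintro x ⟨N, rfl⟩
        exact hdc N
      · intro x hx
        refine hc.2 ?_
        rintro y ⟨n, rfl⟩
        have h4 : cn n ≤ d (n+1) := Finset.le_sup (Finset.self_mem_range_succ n)
        exact h4.trans (hx ⟨n+1, rfl⟩)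
    have htd := hcont d c hdmono hdlub
    obtain ⟨N₀, hN₀⟩ : ∃ N₀, ∀ N, N₀ ≤ N → |μ (d N) - μ c| < ε / 2 := by
      obtain ⟨N₀, h⟩ := Metric.tendsto_atTop.mp htd (ε / 2) (by positivity)
      exact ⟨N₀, fun N hN => by have := h N hN; rwa [Real.dist_eq] at this⟩
    refine ⟨bn, cn, c, N₀, h1, h2, h3, hdc, ?_, ?_⟩
    · refine Set.iUnion_subset fun n => (h2 n).trans (hmono (hc.1 ⟨n, rfl⟩))
    · intro N hN
      have h6 := hN₀ N hN
      have h7 : μ (d N) ≤ μ c := hμmono (hdc N)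
      rw [abs_sub_lt_iff] at h6
      exact h6.2
  -- ### countable unions are in pjField
  have hUnion : ∀ A : ℕ → Set Y, (∀ n, A n ∈ pjField (Set.range φ) ν) →
      (⋃ n, A n) ∈ pjField (Set.range φ) ν := by
    intro A hA
    refine hmem _ ?_
    intro ε hε
    obtain ⟨bn, cn, c, N₀, h1, h2, h3, hdc, hUc, hN₀⟩ := hcore A hA ε hε
    set e : α := (Finset.range N₀).sup bn with he
    refine ⟨e, c, ?_, hUc, ?_⟩
    · exact hφfin bn _ N₀ fun k _ => (h1 k).trans (Set.subset_iUnion A k)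
    · set d : α := (Finset.range N₀).sup cn with hdd
      have h4 : c \ e ≤ (c \ d) ⊔ (d \ e) := sdiff_triangle c d e
      have h5 : μ (c \ e) ≤ μ (c \ d) + μ (d \ e) :=
        (hμmono h4).trans (hμsub _ _)
      have h6 : μ (c \ d) < ε / 2 := by
        rw [hμsdiff (hdc N₀)]
        exact hN₀ N₀ le_rfl
      have h7 : μ (d \ e) ≤ ε / 2 := by
        have h8 : μ (d \ e) ≤ μ ((Finset.range N₀).sup fun k => cn k \ bn k) :=
          hμmono (hsdsup cn bn N₀)
        have h9 := hsupsub (fun k => cn k \ bn k) N₀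
        have h10 : ∑ k ∈ Finset.range N₀, μ (cn k \ bn k) ≤
            ∑ k ∈ Finset.range N₀, ε / 2^(k+2) :=
          Finset.sum_le_sum fun k _ => le_of_lt (h3 k)
        have h11 := hgeo2 ε (le_of_lt hε) N₀
        linarith
      linarith
  -- ### countable additivity of pjCharge
  have hCountAdd : ∀ A : ℕ → Set Y, (∀ n, A n ∈ pjField (Set.range φ) ν) →
      (Pairwise fun i j => Disjoint (A i) (A j)) →
      HasSum (fun n => pjCharge (Set.range φ) ν (A n))
        (pjCharge (Set.range φ) ν (⋃ n, A n)) := by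
    intro A hA hAd
    set S := pjCharge (Set.range φ) ν (⋃ n, A n) with hS
    -- partial sums are bounded by S
    have hub : ∀ N, ∑ n ∈ Finset.range N, pjCharge (Set.range φ) ν (A n) ≤ S := by
      intro N
      have key : ∀ ε > (0:ℝ), ∑ n ∈ Finset.range N, pjCharge (Set.range φ) ν (A n) ≤ S + ε := by
        intro ε hε
        choose bn hbn hbn2 using fun n => hpj_approx (A n) (ε / 2^(n+1)) (by positivity)
        have hbd : Pairwise fun i j => Disjoint (bn i) (bn j) := by
          intro i j hij
          exact hdisj (Set.disjoint_of_subset (hbn i) (hbn j) (hAd hij))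
        have h1 : μ ((Finset.range N).sup bn) = ∑ k ∈ Finset.range N, μ (bn k) :=
          hsupadd bn hbd N
        have h2 : φ ((Finset.range N).sup bn) ⊆ ⋃ n, A n :=
          hφfin bn _ N fun k _ => (hbn k).trans (Set.subset_iUnion A k)
        have h3 := hle_pj _ _ h2
        rw [h1] at h3
        have h4 : ∑ n ∈ Finset.range N, pjCharge (Set.range φ) ν (A n) ≤
            ∑ k ∈ Finset.range N, (μ (bn k) + ε / 2^(k+1)) :=
          Finset.sum_le_sum fun k _ => by linarith [hbn2 k]
        rw [Finset.sum_add_distrib] at h4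
        have h5 := hgeo1 ε (le_of_lt hε) N
        linarith
      by_contra hcon
      push_neg at hcon
      have := key ((∑ n ∈ Finset.range N, pjCharge (Set.range φ) ν (A n) - S) / 2)
        (by linarith)
      linarith
    -- partial sums approach S
    have happrox : ∀ ε > (0:ℝ), ∃ N₀, S ≤
        ∑ n ∈ Finset.range N₀, pjCharge (Set.range φ) ν (A n) + ε := by
      intro ε hε
      obtain ⟨bn, cn, c, N₀, h1, h2, h3, hdc, hUc, hN₀⟩ := hcore A hA ε hε
      refine ⟨N₀, ?_⟩
      have h4 : S ≤ μ c := hpj_le _ _ fun b hb => hμmono (horder (hb.trans hUc))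
      have h5 : μ c ≤ μ ((Finset.range N₀).sup cn) + ε / 2 := by
        have h6 := hN₀ N₀ le_rfl
        linarith
      have h7 : μ ((Finset.range N₀).sup cn) ≤ ∑ k ∈ Finset.range N₀, μ (cn k) :=
        hsupsub cn N₀
      have h8 : ∀ k, μ (cn k) ≤ pjCharge (Set.range φ) ν (A k) + ε / 2^(k+2) := by
        intro k
        have h9 : cn k ≤ bn k ⊔ cn k \ bn k := by
          rw [sup_sdiff_self_right]
          exact le_sup_right
        have h10 := (hμmono h9).trans (hμsub (bn k) (cn k \ bn k))
        have h11 := hle_pj (A k) (bn k) (h1 k)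
        linarith [h3 k]
      have h12 : ∑ k ∈ Finset.range N₀, μ (cn k) ≤
          ∑ k ∈ Finset.range N₀, (pjCharge (Set.range φ) ν (A k) + ε / 2^(k+2)) :=
        Finset.sum_le_sum fun k _ => h8 k
      rw [Finset.sum_add_distrib] at h12
      have h13 := hgeo2 ε (le_of_lt hε) N₀
      linarith
    have hsummable : Summable fun n => pjCharge (Set.range φ) ν (A n) :=
      summable_of_sum_range_le (fun n => hpj_nonneg (A n)) hub
    rw [hasSum_iff_tendsto_nat_of_nonneg (fun n => hpj_nonneg (A n))]
    rw [Metric.tendsto_atTop]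
    intro ε hε
    obtain ⟨N₀, hN₀⟩ := happrox (ε / 2) (by positivity)
    refine ⟨N₀, fun n hn => ?_⟩
    have h1 : ∑ k ∈ Finset.range N₀, pjCharge (Set.range φ) ν (A k) ≤
        ∑ k ∈ Finset.range n, pjCharge (Set.range φ) ν (A k) :=
      Finset.sum_le_sum_of_subset_of_nonneg (Finset.range_subset_range.mpr hn)
        fun k _ _ => hpj_nonneg (A k)
    have h2 := hub n
    rw [Real.dist_eq, abs_sub_comm, abs_of_nonneg (by linarith)]
    linarith
  -- ### assemble the four parts
  refine ⟨?_, hUnion, hCountAdd, ?_⟩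
  · constructor
    · refine hmem _ fun ε hε => ⟨⊥, ⊥, ?_, ?_, ?_⟩
      · rw [hφbot]
      · rw [hφbot]
      · rw [sdiff_bot, hμbot]; exact hε
    · intro A hA
      refine hmem _ fun ε hε => ?_
      obtain ⟨b, c, h1, h2, h3⟩ := hdata A hA ε hε
      refine ⟨cᶜ, bᶜ, ?_, ?_, ?_⟩
      · rw [hφcompl]
        exact Set.compl_subset_compl.mpr h2
      · rw [hφcompl]
        exact Set.compl_subset_compl.mpr h1
      · have h4 : bᶜ \ cᶜ = c \ b := by
          rw [_root_.sdiff_eq, _root_.sdiff_eq, compl_compl, inf_comm]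
        rw [h4]
        exact h3
    · intro A hA B hB
      refine hmem _ fun ε hε => ?_
      obtain ⟨b₁, c₁, h1, h2, h3⟩ := hdata A hA (ε / 2) (by positivity)
      obtain ⟨b₂, c₂, h4, h5, h6⟩ := hdata B hB (ε / 2) (by positivity)
      refine ⟨b₁ ⊔ b₂, c₁ ⊔ c₂, ?_, ?_, ?_⟩
      · rw [hφsup]
        exact Set.union_subset_union h1 h4
      · rw [hφsup]
        exact Set.union_subset_union h2 h5
      · have h7 : (c₁ ⊔ c₂) \ (b₁ ⊔ b₂) ≤ (c₁ \ b₁) ⊔ (c₂ \ b₂) := by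
          rw [sup_sdiff]
          exact sup_le_sup (sdiff_le_sdiff le_rfl le_sup_left)
            (sdiff_le_sdiff le_rfl le_sup_right)
        have h8 := (hμmono h7).trans (hμsub _ _)
        linarith
  · intro N hN hN0 A hA
    refine hmem _ fun ε hε => ?_
    obtain ⟨b, c, h1, h2, h3⟩ := hdata N hN ε hε
    refine ⟨⊥, c, ?_, hA.trans h2, ?_⟩
    · rw [hφbot]
      exact Set.empty_subset A
    · have h4 : μ b ≤ 0 := hN0 ▸ hle_pj N b h1
      have h5 : c ≤ b ⊔ c \ b := by
        rw [sup_sdiff_self_right]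
        exact le_sup_right
      have h6 := (hμmono h5).trans (hμsub b (c \ b))
      have h7 : μ (c \ ⊥) = μ c := by rw [sdiff_bot]
      rw [h7]
      linarith
end

section
/- Suppose 𝒜 and ℬ are Boolean algebras with ℬ a subalgebra of 𝒜, and ℳ is a Boolean ideal of 𝒜. Then the subalgebra α(ℬ ∪ ℳ) of 𝒜 generated by ℬ ∪ ℳ satisfies α(ℬ ∪ ℳ) = {(b ∧ m′) ∨ n : b ∈ ℬ, m, n ∈ ℳ} = {a ∈ 𝒜 : a + b ∈ ℳ for some b ∈ ℬ}, where + denotes the Boolean symmetric difference a + b := (a ∧ b′) ∨ (a′ ∧ b). -/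
open Filter Set Topology

/-- A Boolean subalgebra of `α`, given as a subset. -/
def IsBoolSubalg {α : Type*} [BooleanAlgebra α] (S : Set α) : Prop :=
  ⊥ ∈ S ∧ (∀ a ∈ S, aᶜ ∈ S) ∧ (∀ a ∈ S, ∀ b ∈ S, a ⊔ b ∈ S)

/-- A Boolean ideal of `α`: contains `⊥`, closed under joins, downward closed. -/
def IsBoolIdeal {α : Type*} [BooleanAlgebra α] (M : Set α) : Prop :=
  ⊥ ∈ M ∧ (∀ a ∈ M, ∀ b ∈ M, a ⊔ b ∈ M) ∧ (∀ a ∈ M, ∀ b : α, b ≤ a → b ∈ M)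

/-- The smallest Boolean subalgebra of `α` containing `C`. -/
def genBoolSubalg {α : Type*} [BooleanAlgebra α] (C : Set α) : Set α :=
  ⋂₀ {S | IsBoolSubalg S ∧ C ⊆ S}

open scoped symmDiff

/-- For a subalgebra `ℬ` and an ideal `ℳ` of a Boolean algebra `𝒜`,
`α(ℬ ∪ ℳ) = {(b ⊓ m′) ⊔ n : b ∈ ℬ, m, n ∈ ℳ} = {a : a + b ∈ ℳ for some b ∈ ℬ}`,
where `+` is the Boolean symmetric difference. -/
theorem field_plus_null {α : Type*} [BooleanAlgebra α] (B M : Set α)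
    (hB : IsBoolSubalg B) (hM : IsBoolIdeal M) :
    genBoolSubalg (B ∪ M) = {x | ∃ b ∈ B, ∃ m ∈ M, ∃ n ∈ M, x = (b ⊓ mᶜ) ⊔ n} ∧
    genBoolSubalg (B ∪ M) = {a | ∃ b ∈ B, (a ⊓ bᶜ) ⊔ (aᶜ ⊓ b) ∈ M} := by
    -- abbreviation: the "symmetric difference form" equals symmDiff
  have hsd : ∀ a b : α, (a ⊓ bᶜ) ⊔ (aᶜ ⊓ b) = a ∆ b := by
    intro a b
    simp [symmDiff_def, _root_.sdiff_eq, inf_comm]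
  set S1 : Set α := {x | ∃ b ∈ B, ∃ m ∈ M, ∃ n ∈ M, x = (b ⊓ mᶜ) ⊔ n} with hS1def
  set S2 : Set α := {a | ∃ b ∈ B, (a ⊓ bᶜ) ⊔ (aᶜ ⊓ b) ∈ M} with hS2def
  obtain ⟨hBbot, hBcompl, hBsup⟩ := hB
  obtain ⟨hMbot, hMsup, hMdown⟩ := hM
  -- S2 is a Boolean subalgebra
  have hS2alg : IsBoolSubalg S2 := by
    refine ⟨⟨⊥, hBbot, ?_⟩, ?_, ?_⟩
    · simpa using hMbot
    · rintro a ⟨b, hb, hm⟩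
      refine ⟨bᶜ, hBcompl b hb, ?_⟩
      rw [hsd] at hm ⊢
      rwa [compl_symmDiff_compl]
    · rintro a ⟨b, hb, hm⟩ c ⟨d, hd, hm'⟩
      refine ⟨b ⊔ d, hBsup b hb d hd, ?_⟩
      rw [hsd] at hm hm' ⊢
      refine hMdown _ (hMsup _ hm _ hm') _ ?_
      rw [symmDiff_def, symmDiff_def, symmDiff_def]
      simp only [_root_.sdiff_eq, compl_sup]
      refine sup_le ?_ ?_
      · rw [inf_sup_right]
        exact sup_le (le_trans (inf_le_inf_left _ inf_le_left)
            (le_sup_of_le_left le_sup_left))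
          (le_trans (inf_le_inf_left _ inf_le_right) (le_sup_of_le_right le_sup_left))
      · rw [inf_sup_right]
        exact sup_le (le_trans (inf_le_inf_left _ inf_le_left)
            (le_sup_of_le_left le_sup_right))
          (le_trans (inf_le_inf_left _ inf_le_right) (le_sup_of_le_right le_sup_right))
  -- B ∪ M ⊆ S2
  have hBMS2 : B ∪ M ⊆ S2 := by
    rintro a (ha | ha)
    · exact ⟨a, ha, by simpa [hsd] using hMbot⟩
    · exact ⟨⊥, hBbot, by simpa [hsd] using ha⟩
  -- gen ⊆ S2
  have hgen2 : genBoolSubalg (B ∪ M) ⊆ S2 := fun x hx => hx S2 ⟨hS2alg, hBMS2⟩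
  -- S2 ⊆ S1
  have h21 : S2 ⊆ S1 := by
    rintro a ⟨b, hb, hm⟩
    refine ⟨b, hb, aᶜ ⊓ b, hMdown _ hm _ le_sup_right, a ⊓ bᶜ,
      hMdown _ hm _ le_sup_left, ?_⟩
    have : b ⊓ (aᶜ ⊓ b)ᶜ = a ⊓ b := by
      rw [compl_inf, compl_compl, inf_sup_left]
      simp [inf_comm]
    rw [this, ← inf_sup_left, sup_compl_eq_top, inf_top_eq]
  -- S1 ⊆ gen
  have h1gen : S1 ⊆ genBoolSubalg (B ∪ M) := by
    rintro x ⟨b, hb, m, hm, n, hn, rfl⟩ S ⟨⟨hSbot, hScompl, hSsup⟩, hSsub⟩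
    have hbS : b ∈ S := hSsub (Or.inl hb)
    have hmS : m ∈ S := hSsub (Or.inr hm)
    have hnS : n ∈ S := hSsub (Or.inr hn)
    have hinf : b ⊓ mᶜ = (bᶜ ⊔ m)ᶜ := by simp
    rw [hinf]
    exact hSsup _ (hScompl _ (hSsup _ (hScompl _ hbS) _ hmS)) _ hnS
  have e1 : genBoolSubalg (B ∪ M) = S1 :=
    Set.Subset.antisymm (fun x hx => h21 (hgen2 hx)) h1gen
  have e2 : genBoolSubalg (B ∪ M) = S2 :=
    Set.Subset.antisymm hgen2 (fun x hx => h1gen (h21 hx))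
  exact ⟨e1, e2⟩
end

section
/- Let (X,𝒜,μ) be a bounded charge space with collection of null sets 𝒩 := {A ⊆ X : μ*(A) = 0}. Then μ has a unique extension to a bounded charge on the field α(𝒜 ∪ 𝒩) generated in 𝒫(X) by 𝒜 ∪ 𝒩. Moreover, (X, α(𝒜 ∪ 𝒩), μ) is a complete charge space (it contains all of its null sets) whose collection of null sets is exactly 𝒩. -/
open Filter Set Topology

namespace CFE

variable {X : Type*}

lemma sf_univ_mem {𝒜 : Set (Set X)} (h : IsSetField 𝒜) : Set.univ ∈ 𝒜 := by
  simpa using h.compl_mem ∅ h.empty_mem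

lemma sf_inter_mem {𝒜 : Set (Set X)} (h : IsSetField 𝒜) {A B : Set X}
    (hA : A ∈ 𝒜) (hB : B ∈ 𝒜) : A ∩ B ∈ 𝒜 := by
  have := h.compl_mem _ (h.union_mem _ (h.compl_mem _ hA) _ (h.compl_mem _ hB))
  simpa [Set.compl_union] using this

lemma sf_diff_mem {𝒜 : Set (Set X)} (h : IsSetField 𝒜) {A B : Set X}
    (hA : A ∈ 𝒜) (hB : B ∈ 𝒜) : A \ B ∈ 𝒜 := by
  have := sf_inter_mem h hA (h.compl_mem _ hB)
  simpa [Set.diff_eq] using this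

variable {𝒜 : Set (Set X)} {μ : Set X → ℝ}

lemma charge_mono (hμ : IsCharge 𝒜 μ) {A B : Set X} (hA : A ∈ 𝒜) (hB : B ∈ 𝒜)
    (hAB : A ⊆ B) : μ A ≤ μ B := by
  have h1 : μ B = μ A + μ (B \ A) := by
    conv_lhs => rw [← Set.union_diff_cancel hAB]
    exact hμ.additive _ hA _ (sf_diff_mem hμ.isSetField hB hA) disjoint_sdiff_self_right
  have h2 : 0 ≤ μ (B \ A) := hμ.nonneg _ (sf_diff_mem hμ.isSetField hB hA)
  linarith

lemma charge_subadd (hμ : IsCharge 𝒜 μ) {A B : Set X} (hA : A ∈ 𝒜) (hB : B ∈ 𝒜) :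
    μ (A ∪ B) ≤ μ A + μ B := by
  have hBA : B \ A ∈ 𝒜 := sf_diff_mem hμ.isSetField hB hA
  have h1 : μ (A ∪ B) = μ A + μ (B \ A) := by
    rw [← Set.union_diff_self]
    exact hμ.additive _ hA _ hBA disjoint_sdiff_self_right
  have h2 : μ (B \ A) ≤ μ B := charge_mono hμ hBA hB Set.diff_subset
  linarith

lemma oc_set_nonempty (hμ : IsCharge 𝒜 μ) (A : Set X) :
    (μ '' {B | B ∈ 𝒜 ∧ A ⊆ B}).Nonempty :=
  ⟨μ Set.univ, Set.univ, ⟨sf_univ_mem hμ.isSetField, Set.subset_univ _⟩, rfl⟩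

lemma oc_bddBelow (hμ : IsCharge 𝒜 μ) (A : Set X) :
    BddBelow (μ '' {B | B ∈ 𝒜 ∧ A ⊆ B}) := by
  refine ⟨0, ?_⟩
  rintro y ⟨B, ⟨hB, -⟩, rfl⟩
  exact hμ.nonneg _ hB

lemma oc_le (hμ : IsCharge 𝒜 μ) {A B : Set X} (hB : B ∈ 𝒜) (hAB : A ⊆ B) :
    outerCharge 𝒜 μ A ≤ μ B :=
  csInf_le (oc_bddBelow hμ A) ⟨B, ⟨hB, hAB⟩, rfl⟩

lemma oc_nonneg (hμ : IsCharge 𝒜 μ) (A : Set X) : 0 ≤ outerCharge 𝒜 μ A := by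
  apply le_csInf (oc_set_nonempty hμ A)
  rintro y ⟨B, ⟨hB, -⟩, rfl⟩
  exact hμ.nonneg _ hB

lemma oc_mono (hμ : IsCharge 𝒜 μ) {A B : Set X} (hAB : A ⊆ B) :
    outerCharge 𝒜 μ A ≤ outerCharge 𝒜 μ B := by
  apply le_csInf (oc_set_nonempty hμ B)
  rintro y ⟨C, ⟨hC, hBC⟩, rfl⟩
  exact oc_le hμ hC (hAB.trans hBC)

lemma oc_exists_lt (hμ : IsCharge 𝒜 μ) {A : Set X} {c : ℝ} (h : outerCharge 𝒜 μ A < c) :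
    ∃ B ∈ 𝒜, A ⊆ B ∧ μ B < c := by
  obtain ⟨y, ⟨B, ⟨hB, hAB⟩, rfl⟩, hy⟩ := exists_lt_of_csInf_lt (oc_set_nonempty hμ A) h
  exact ⟨B, hB, hAB, hy⟩

lemma oc_subadd (hμ : IsCharge 𝒜 μ) (A B : Set X) :
    outerCharge 𝒜 μ (A ∪ B) ≤ outerCharge 𝒜 μ A + outerCharge 𝒜 μ B := by
  apply le_of_forall_pos_le_add
  intro ε hε
  obtain ⟨C, hC, hAC, hCμ⟩ := oc_exists_lt hμ (lt_add_of_pos_right (outerCharge 𝒜 μ A) (by linarith : (0:ℝ) < ε / 2))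
  obtain ⟨D, hD, hBD, hDμ⟩ := oc_exists_lt hμ (lt_add_of_pos_right (outerCharge 𝒜 μ B) (by linarith : (0:ℝ) < ε / 2))
  have h1 : outerCharge 𝒜 μ (A ∪ B) ≤ μ (C ∪ D) :=
    oc_le hμ (hμ.isSetField.union_mem _ hC _ hD) (Set.union_subset_union hAC hBD)
  have h2 := charge_subadd hμ hC hD
  linarith

lemma oc_eq (hμ : IsCharge 𝒜 μ) {A : Set X} (hA : A ∈ 𝒜) : outerCharge 𝒜 μ A = μ A := by
  refine le_antisymm (oc_le hμ hA subset_rfl) ?_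
  apply le_csInf (oc_set_nonempty hμ A)
  rintro y ⟨B, ⟨hB, hAB⟩, rfl⟩
  exact charge_mono hμ hA hB hAB

lemma oc_zero_of_subset (hμ : IsCharge 𝒜 μ) {A B : Set X} (hAB : A ⊆ B)
    (hB : outerCharge 𝒜 μ B = 0) : outerCharge 𝒜 μ A = 0 :=
  le_antisymm (hB ▸ oc_mono hμ hAB) (oc_nonneg hμ A)

lemma oc_union_zero (hμ : IsCharge 𝒜 μ) {A B : Set X} (hA : outerCharge 𝒜 μ A = 0)
    (hB : outerCharge 𝒜 μ B = 0) : outerCharge 𝒜 μ (A ∪ B) = 0 :=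
  le_antisymm (by have := oc_subadd hμ A B; rw [hA, hB] at this; linarith)
    (oc_nonneg hμ _)

lemma oc_empty (hμ : IsCharge 𝒜 μ) : outerCharge 𝒜 μ (∅ : Set X) = 0 :=
  le_antisymm (by simpa [hμ.empty] using oc_le hμ hμ.isSetField.empty_mem subset_rfl)
    (oc_nonneg hμ _)

/-- The completion field: sets differing from a member of `𝒜` by a null set. -/
def compField (𝒜 : Set (Set X)) (μ : Set X → ℝ) : Set (Set X) :=
  {A | ∃ B ∈ 𝒜, outerCharge 𝒜 μ (A \ B) = 0 ∧ outerCharge 𝒜 μ (B \ A) = 0}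

lemma mem_compField_of_mem (hμ : IsCharge 𝒜 μ) {A : Set X} (hA : A ∈ 𝒜) :
    A ∈ compField 𝒜 μ :=
  ⟨A, hA, by simpa using oc_empty hμ, by simpa using oc_empty hμ⟩

lemma mem_compField_of_null (hμ : IsCharge 𝒜 μ) {A : Set X} (hA : A ∈ nullSets 𝒜 μ) :
    A ∈ compField 𝒜 μ :=
  ⟨∅, hμ.isSetField.empty_mem, by rw [Set.diff_empty]; exact hA, by simpa using oc_empty hμ⟩

lemma compField_isSetField (hμ : IsCharge 𝒜 μ) : IsSetField (compField 𝒜 μ) := by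
  constructor
  · exact mem_compField_of_mem hμ hμ.isSetField.empty_mem
  · rintro A ⟨B, hB, h1, h2⟩
    refine ⟨Bᶜ, hμ.isSetField.compl_mem _ hB, ?_, ?_⟩
    · have e : Aᶜ \ Bᶜ = B \ A := by ext x; simp [Set.mem_diff]; tauto
      rw [e]; exact h2
    · have e : Bᶜ \ Aᶜ = A \ B := by ext x; simp [Set.mem_diff]; tauto
      rw [e]; exact h1
  · rintro A ⟨B, hB, h1, h2⟩ A' ⟨B', hB', h1', h2'⟩
    refine ⟨B ∪ B', hμ.isSetField.union_mem _ hB _ hB', ?_, ?_⟩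
    · refine oc_zero_of_subset hμ ?_ (oc_union_zero hμ h1 h1')
      intro x hx
      rcases hx.1 with h | h
      · exact Or.inl ⟨h, fun hxB => hx.2 (Or.inl hxB)⟩
      · exact Or.inr ⟨h, fun hxB => hx.2 (Or.inr hxB)⟩
    · refine oc_zero_of_subset hμ ?_ (oc_union_zero hμ h2 h2')
      intro x hx
      rcases hx.1 with h | h
      · exact Or.inl ⟨h, fun hxA => hx.2 (Or.inl hxA)⟩
      · exact Or.inr ⟨h, fun hxA => hx.2 (Or.inr hxA)⟩

lemma genSetField_eq (hμ : IsCharge 𝒜 μ) :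
    genSetField (𝒜 ∪ nullSets 𝒜 μ) = compField 𝒜 μ := by
  apply subset_antisymm
  · intro A hA
    refine hA _ ⟨compField_isSetField hμ, ?_⟩
    rintro C (hC | hC)
    · exact mem_compField_of_mem hμ hC
    · exact mem_compField_of_null hμ hC
  · rintro A ⟨B, hB, h1, h2⟩ 𝒟 ⟨h𝒟, hsub⟩
    have hB' : B ∈ 𝒟 := hsub (Or.inl hB)
    have hN1 : A \ B ∈ 𝒟 := hsub (Or.inr h1)
    have hN2 : B \ A ∈ 𝒟 := hsub (Or.inr h2)
    have hrw : A = (B ∪ A \ B) \ (B \ A) := by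
      ext x
      by_cases hx : x ∈ A <;> by_cases hx' : x ∈ B <;> simp [hx, hx']
    rw [hrw]
    exact sf_diff_mem h𝒟 (h𝒟.union_mem _ hB' _ hN1) hN2

lemma oc_eq_of_witness (hμ : IsCharge 𝒜 μ) {A B : Set X} (hB : B ∈ 𝒜)
    (h1 : outerCharge 𝒜 μ (A \ B) = 0) (h2 : outerCharge 𝒜 μ (B \ A) = 0) :
    outerCharge 𝒜 μ A = μ B := by
  have hle : outerCharge 𝒜 μ A ≤ μ B := by
    have := oc_subadd hμ B (A \ B)
    have hmono : outerCharge 𝒜 μ A ≤ outerCharge 𝒜 μ (B ∪ A \ B) := by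
      apply oc_mono hμ
      intro x hx
      by_cases hxB : x ∈ B
      · exact Or.inl hxB
      · exact Or.inr ⟨hx, hxB⟩
    rw [h1, oc_eq hμ hB] at this
    linarith
  have hge : μ B ≤ outerCharge 𝒜 μ A := by
    have := oc_subadd hμ A (B \ A)
    have hmono : outerCharge 𝒜 μ B ≤ outerCharge 𝒜 μ (A ∪ B \ A) := by
      apply oc_mono hμ
      intro x hx
      by_cases hxA : x ∈ A
      · exact Or.inl hxA
      · exact Or.inr ⟨hx, hxA⟩
    rw [h2, oc_eq hμ hB] at *
    linarith
  linarith

lemma compField_charge (hμ : IsCharge 𝒜 μ) :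
    IsCharge (compField 𝒜 μ) (outerCharge 𝒜 μ) := by
  refine ⟨compField_isSetField hμ, oc_empty hμ, fun A _ => oc_nonneg hμ A, ?_⟩
  rintro A ⟨B, hB, h1, h2⟩ A' ⟨B', hB', h1', h2'⟩ hdisj
  -- μ (B ∩ B') = 0
  have hBB' : B ∩ B' ∈ 𝒜 := sf_inter_mem hμ.isSetField hB hB'
  have hint : μ (B ∩ B') = 0 := by
    have hsub : B ∩ B' ⊆ (B \ A) ∪ (B' \ A') := by
      rintro x ⟨hxB, hxB'⟩
      by_cases hxA : x ∈ A
      · exact Or.inr ⟨hxB', fun hxA' => (Set.disjoint_left.mp hdisj hxA) hxA'⟩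
      · exact Or.inl ⟨hxB, hxA⟩
    have := oc_zero_of_subset hμ hsub (oc_union_zero hμ h2 h2')
    rw [oc_eq hμ hBB'] at this
    exact this
  have hBdisj : μ (B ∪ B') = μ B + μ B' := by
    have e1 : μ (B ∪ B') = μ B + μ (B' \ B) := by
      rw [← Set.union_diff_self]
      exact hμ.additive _ hB _ (sf_diff_mem hμ.isSetField hB' hB) disjoint_sdiff_self_right
    have e2 : μ B' = μ (B' \ B) + μ (B' ∩ B) := by
      conv_lhs => rw [show B' = (B' \ B) ∪ (B' ∩ B) by simp [Set.diff_union_inter]]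
      exact hμ.additive _ (sf_diff_mem hμ.isSetField hB' hB) _
        (sf_inter_mem hμ.isSetField hB' hB)
        (Set.disjoint_left.mpr fun x hx hx' => hx.2 hx'.2)
    rw [Set.inter_comm] at e2
    rw [e1, e2, hint]
    ring
  have hUnull1 : outerCharge 𝒜 μ ((A ∪ A') \ (B ∪ B')) = 0 := by
    refine oc_zero_of_subset hμ ?_ (oc_union_zero hμ h1 h1')
    rintro x ⟨hx, hx'⟩
    rcases hx with h | h
    · exact Or.inl ⟨h, fun hxB => hx' (Or.inl hxB)⟩
    · exact Or.inr ⟨h, fun hxB => hx' (Or.inr hxB)⟩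
  have hUnull2 : outerCharge 𝒜 μ ((B ∪ B') \ (A ∪ A')) = 0 := by
    refine oc_zero_of_subset hμ ?_ (oc_union_zero hμ h2 h2')
    rintro x ⟨hx, hx'⟩
    rcases hx with h | h
    · exact Or.inl ⟨h, fun hxA => hx' (Or.inl hxA)⟩
    · exact Or.inr ⟨h, fun hxA => hx' (Or.inr hxA)⟩
  rw [oc_eq_of_witness hμ (hμ.isSetField.union_mem _ hB _ hB') hUnull1 hUnull2,
    oc_eq_of_witness hμ hB h1 h2, oc_eq_of_witness hμ hB' h1' h2', hBdisj]

lemma charge_null_zero {ν' : Set X → ℝ} (hμ : IsCharge 𝒜 μ)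
    (hν' : IsCharge (compField 𝒜 μ) ν') (hext : ∀ A ∈ 𝒜, ν' A = μ A)
    {N : Set X} (hN : N ∈ nullSets 𝒜 μ) : ν' N = 0 := by
  have hNmem : N ∈ compField 𝒜 μ := mem_compField_of_null hμ hN
  have hle : ∀ ε > (0 : ℝ), ν' N ≤ ε := by
    intro ε hε
    have : outerCharge 𝒜 μ N < ε := by rw [hN]; exact hε
    obtain ⟨C, hC, hNC, hCμ⟩ := oc_exists_lt hμ this
    have := charge_mono hν' hNmem (mem_compField_of_mem hμ hC) hNC
    rw [hext C hC] at this
    linarith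
  have h0 : ν' N ≤ 0 := by
    by_contra h
    push_neg at h
    linarith [hle (ν' N / 2) (by linarith)]
  linarith [hν'.nonneg N hNmem, h0]

end CFE

/-- `μ` has a unique extension to a charge on the field generated by
`𝒜 ∪ 𝒩`; the resulting charge space is complete, with null sets exactly `𝒩`. -/
theorem complete_field_extension {X : Type*} (𝒜 : Set (Set X)) (μ : Set X → ℝ)
    (hμ : IsCharge 𝒜 μ) :
    ∃ ν : Set X → ℝ,
      (IsCharge (genSetField (𝒜 ∪ nullSets 𝒜 μ)) ν ∧ ∀ A ∈ 𝒜, ν A = μ A) ∧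
      (∀ ν' : Set X → ℝ, IsCharge (genSetField (𝒜 ∪ nullSets 𝒜 μ)) ν' →
        (∀ A ∈ 𝒜, ν' A = μ A) →
        ∀ A ∈ genSetField (𝒜 ∪ nullSets 𝒜 μ), ν' A = ν A) ∧
      nullSets (genSetField (𝒜 ∪ nullSets 𝒜 μ)) ν = nullSets 𝒜 μ ∧
      nullSets 𝒜 μ ⊆ genSetField (𝒜 ∪ nullSets 𝒜 μ) := by
  have hgen := CFE.genSetField_eq hμ
  have hνc := CFE.compField_charge hμ
  refine ⟨outerCharge 𝒜 μ, ⟨?_, fun A hA => CFE.oc_eq hμ hA⟩, ?_, ?_, ?_⟩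
  · rw [hgen]; exact hνc
  · -- uniqueness
    intro ν' hν' hext A hA
    rw [hgen] at hν' hA
    obtain ⟨B, hB, h1, h2⟩ := hA
    have hAmem : A ∈ CFE.compField 𝒜 μ := ⟨B, hB, h1, h2⟩
    have hBmem : B ∈ CFE.compField 𝒜 μ := CFE.mem_compField_of_mem hμ hB
    have hN1 : A \ B ∈ CFE.compField 𝒜 μ := CFE.mem_compField_of_null hμ h1
    have hN2 : B \ A ∈ CFE.compField 𝒜 μ := CFE.mem_compField_of_null hμ h2
    have hz1 : ν' (A \ B) = 0 := CFE.charge_null_zero hμ hν' hext h1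
    have hz2 : ν' (B \ A) = 0 := CFE.charge_null_zero hμ hν' hext h2
    have hle : ν' A ≤ μ B := by
      have hmono : ν' A ≤ ν' (B ∪ A \ B) := by
        refine CFE.charge_mono hν' hAmem (hν'.isSetField.union_mem _ hBmem _ hN1) ?_
        intro x hx
        by_cases hxB : x ∈ B
        · exact Or.inl hxB
        · exact Or.inr ⟨hx, hxB⟩
      have hsub := CFE.charge_subadd hν' hBmem hN1
      rw [hz1, hext B hB] at hsub
      linarith
    have hge : μ B ≤ ν' A := by
      have hmono : ν' B ≤ ν' (A ∪ B \ A) := by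
        refine CFE.charge_mono hν' hBmem (hν'.isSetField.union_mem _ hAmem _ hN2) ?_
        intro x hx
        by_cases hxA : x ∈ A
        · exact Or.inl hxA
        · exact Or.inr ⟨hx, hxA⟩
      have hsub := CFE.charge_subadd hν' hAmem hN2
      rw [hz2] at hsub
      rw [hext B hB] at hmono
      linarith
    rw [CFE.oc_eq_of_witness hμ hB h1 h2]
    linarith
  · -- null sets coincide
    rw [hgen]
    ext A
    simp only [nullSets, Set.mem_setOf_eq]
    constructor
    · intro h
      have hle : ∀ ε > (0 : ℝ), outerCharge 𝒜 μ A ≤ ε := by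
        intro ε hε
        have h' : outerCharge (CFE.compField 𝒜 μ) (outerCharge 𝒜 μ) A < ε := by
          rw [h]; exact hε
        obtain ⟨C, hC, hAC, hCν⟩ := CFE.oc_exists_lt hνc h'
        obtain ⟨D, hD, hCD, hDμ⟩ := CFE.oc_exists_lt hμ hCν
        have := CFE.oc_le hμ hD (hAC.trans hCD)
        linarith
      have h0 : outerCharge 𝒜 μ A ≤ 0 :=
        le_of_forall_pos_le_add (by simpa using hle)
      linarith [CFE.oc_nonneg hμ A]
    · intro h
      have hle : ∀ ε > (0 : ℝ), outerCharge (CFE.compField 𝒜 μ) (outerCharge 𝒜 μ) A ≤ ε := by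
        intro ε hε
        have h' : outerCharge 𝒜 μ A < ε := by rw [h]; exact hε
        obtain ⟨D, hD, hAD, hDμ⟩ := CFE.oc_exists_lt hμ h'
        have := CFE.oc_le hνc (CFE.mem_compField_of_mem hμ hD) hAD
        rw [CFE.oc_eq hμ hD] at this
        linarith
      have h0 : outerCharge (CFE.compField 𝒜 μ) (outerCharge 𝒜 μ) A ≤ 0 :=
        le_of_forall_pos_le_add (by simpa using hle)
      linarith [CFE.oc_nonneg hνc A]
  · -- null sets belong to the generated field
    intro N hN
    rw [hgen]
    exact CFE.mem_compField_of_null hμ hN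
end
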